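/- arXiv:1411.5923 — 3 statements merged into one kernel-verified Lean document; each statement's English description precedes it below -/
import Mathlib

section
/- The switched Markov jump linear system (𝒢,Π,Ψ) is uniformly exponentially mean square stable if and only if there exist M ∈ ℕ₀ and a function X assigning to each (i,(r_1,…,r_M)) ∈ 𝒩 × Ψ_M a symmetric positive definite n×n real matrix X(i,r_1,…,r_M) such that A(i)ᵀ (Σ_{j=1}^{N} π_{ij}(r_1) X(j,r_2,…,r_{M+1})) A(i) − X(i,r_1,…,r_M) is negative definite for every (r_1,…,r_{M+1}) ∈ Ψ_{M+1} and every i ∈ 𝒩. -/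
open Matrix
open scoped Classical

noncomputable section

namespace SMJLS

/-- The ordered product `Φ = A(t(d−1)) ⋯ A(t 1) A(t 0)` along a tuple of modes. -/
def pathProd {n N : ℕ} (Am : Fin N → Matrix (Fin n) (Fin n) ℝ) {d : ℕ}
    (t : Fin d → Fin N) : Matrix (Fin n) (Fin n) ℝ :=
  (((List.finRange d).reverse).map fun l => Am (t l)).prod

/-- `Gmat Am Pm ψ i j k` is `E[Φ(k,j)ᵀ Φ(k,j) ∣ θ(j) = i]`, written as the explicit sum over
tuples `(i_j, …, i_{k−1}) ∈ 𝒩^{k−j}` with `i_j = i` of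
`(∏_{l=j+1}^{k−1} π_{i_{l−1} i_l}(ψ(l))) • ΦᵀΦ` where `Φ = A(i_{k−1}) ⋯ A(i_j)`;
by convention it is `I` when `k = j`. -/
def Gmat {n N J : ℕ} (Am : Fin N → Matrix (Fin n) (Fin n) ℝ)
    (Pm : Fin J → Matrix (Fin N) (Fin N) ℝ) (ψ : ℕ → Fin J) (i : Fin N) (j k : ℕ) :
    Matrix (Fin n) (Fin n) ℝ :=
  if k ≤ j then 1
  else
    ∑ t : Fin (k - j - 1 + 1) → Fin N,
      (if t 0 = i then
          ∏ l : Fin (k - j - 1), Pm (ψ (j + (l : ℕ) + 1)) (t l.castSucc) (t l.succ)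
        else 0) • ((pathProd Am t)ᵀ * pathProd Am t)

/-- Exponential mean square stability (of a single switching sequence) with
explicit constants `c` and `lam`:  `G_ψ(i,j,k) ≤ c λ^(k−j) I` in the Loewner order. -/
def EMSSWith {n N J : ℕ} (Am : Fin N → Matrix (Fin n) (Fin n) ℝ)
    (Pm : Fin J → Matrix (Fin N) (Fin N) ℝ) (c lam : ℝ) (ψ : ℕ → Fin J) : Prop :=
  ∀ (i : Fin N) (j k : ℕ), j ≤ k →
    ((c * lam ^ (k - j)) • (1 : Matrix (Fin n) (Fin n) ℝ) - Gmat Am Pm ψ i j k).PosSemidef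

/-- Uniform exponential mean square stability of the switched Markov jump linear system. -/
def UEMSS {n N J : ℕ} (Am : Fin N → Matrix (Fin n) (Fin n) ℝ)
    (Pm : Fin J → Matrix (Fin N) (Fin N) ℝ) (Ψ : Set (ℕ → Fin J)) : Prop :=
  ∃ c lam : ℝ, 1 ≤ c ∧ 0 ≤ lam ∧ lam < 1 ∧ ∀ ψ ∈ Ψ, EMSSWith Am Pm c lam ψ

/-- Probability of the cylinder `{θ(0) = path 0, …, θ(k) = path k}`. -/
def weight {N J : ℕ} (Pm : Fin J → Matrix (Fin N) (Fin N) ℝ) (ψ : ℕ → Fin J)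
    (p0 : Fin N → ℝ) (k : ℕ) (path : Fin (k + 1) → Fin N) : ℝ :=
  p0 (path 0) * ∏ l : Fin k, Pm (ψ ((l : ℕ) + 1)) (path l.castSucc) (path l.succ)

/-- Expectation of a functional `g` of the chain which depends only on `θ(0), …, θ(k)`. -/
def pexp {N J : ℕ} (Pm : Fin J → Matrix (Fin N) (Fin N) ℝ) (ψ : ℕ → Fin J)
    (p0 : Fin N → ℝ) (k : ℕ) (g : (ℕ → Fin N) → ℝ) : ℝ :=
  ∑ path : Fin (k + 1) → Fin N,
    weight Pm ψ p0 k path *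
      g (fun l => path ⟨min l k, Nat.lt_succ_of_le (min_le_right l k)⟩)

/-- A disturbance process is adapted when `w(k)` is measurable with respect to
`σ(θ(0),…,θ(k))`, i.e. `w(k)` is a function of the first `k+1` modes. -/
def Adapted {N m : ℕ} (w : ℕ → (ℕ → Fin N) → Fin m → ℝ) : Prop :=
  ∀ (k : ℕ) (ω ω' : ℕ → Fin N), (∀ l, l ≤ k → ω l = ω' l) → w k ω = w k ω'

/-- State trajectory: `x(k+1) = A(θ(k)) x(k) + B(θ(k)) w(k)`, `x(0) = x0`. -/
def traj {n m N : ℕ} (Am : Fin N → Matrix (Fin n) (Fin n) ℝ)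
    (Bm : Fin N → Matrix (Fin n) (Fin m) ℝ) (x0 : (ℕ → Fin N) → Fin n → ℝ)
    (w : ℕ → (ℕ → Fin N) → Fin m → ℝ) : ℕ → (ℕ → Fin N) → Fin n → ℝ
  | 0, ω => x0 ω
  | k + 1, ω => (Am (ω k)).mulVec (traj Am Bm x0 w k ω) + (Bm (ω k)).mulVec (w k ω)

/-- Error trajectory: `z(k) = C(θ(k)) x(k) + D(θ(k)) w(k)`. -/
def errv {n m p N : ℕ} (Am : Fin N → Matrix (Fin n) (Fin n) ℝ)
    (Bm : Fin N → Matrix (Fin n) (Fin m) ℝ) (Cm : Fin N → Matrix (Fin p) (Fin n) ℝ)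
    (Dm : Fin N → Matrix (Fin p) (Fin m) ℝ) (x0 : (ℕ → Fin N) → Fin n → ℝ)
    (w : ℕ → (ℕ → Fin N) → Fin m → ℝ) (k : ℕ) (ω : ℕ → Fin N) : Fin p → ℝ :=
  (Cm (ω k)).mulVec (traj Am Bm x0 w k ω) + (Dm (ω k)).mulVec (w k ω)

/-- `E[‖v(k)‖²]` for an adapted process `v`. -/
def energy {N J d : ℕ} (Pm : Fin J → Matrix (Fin N) (Fin N) ℝ) (ψ : ℕ → Fin J)
    (p0 : Fin N → ℝ) (v : ℕ → (ℕ → Fin N) → Fin d → ℝ) (k : ℕ) : ℝ :=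
  pexp Pm ψ p0 k (fun ω => v k ω ⬝ᵥ v k ω)

/-- Mean square strict contractiveness with constant `γ` for the single switching
sequence `ψ` : whenever `x(0) = 0`, `‖z‖_{2,e} ≤ γ ‖w‖_{2,e}` for every admissible `w`. -/
def ContractiveWith {n m p N J : ℕ} (Am : Fin N → Matrix (Fin n) (Fin n) ℝ)
    (Bm : Fin N → Matrix (Fin n) (Fin m) ℝ) (Cm : Fin N → Matrix (Fin p) (Fin n) ℝ)
    (Dm : Fin N → Matrix (Fin p) (Fin m) ℝ) (Pm : Fin J → Matrix (Fin N) (Fin N) ℝ)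
    (γ : ℝ) (ψ : ℕ → Fin J) (p0 : Fin N → ℝ) : Prop :=
  ∀ w : ℕ → (ℕ → Fin N) → Fin m → ℝ, Adapted w →
    Summable (fun k => energy Pm ψ p0 w k) →
    Summable (fun k => energy Pm ψ p0 (errv Am Bm Cm Dm (fun _ => 0) w) k) ∧
      ∑' k, energy Pm ψ p0 (errv Am Bm Cm Dm (fun _ => 0) w) k ≤
        γ ^ 2 * ∑' k, energy Pm ψ p0 w k

/-- Uniform mean square strict contractiveness of the switched system. -/
def UMSSC {n m p N J : ℕ} (Am : Fin N → Matrix (Fin n) (Fin n) ℝ)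
    (Bm : Fin N → Matrix (Fin n) (Fin m) ℝ) (Cm : Fin N → Matrix (Fin p) (Fin n) ℝ)
    (Dm : Fin N → Matrix (Fin p) (Fin m) ℝ) (Pm : Fin J → Matrix (Fin N) (Fin N) ℝ)
    (Ψ : Set (ℕ → Fin J)) (p0 : Fin N → ℝ) : Prop :=
  ∃ γ : ℝ, 0 < γ ∧ γ < 1 ∧ ∀ ψ ∈ Ψ, ContractiveWith Am Bm Cm Dm Pm γ ψ p0

/-- Marginal distribution `p(k) = p(0) Π(ψ(1)) ⋯ Π(ψ(k))` of the chain. -/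
def pdist {N J : ℕ} (Pm : Fin J → Matrix (Fin N) (Fin N) ℝ) (ψ : ℕ → Fin J)
    (p0 : Fin N → ℝ) : ℕ → Fin N → ℝ
  | 0 => p0
  | k + 1 => Matrix.vecMul (pdist Pm ψ p0 k) (Pm (ψ (k + 1)))

/-- `ℒ(i,X) = A(i)ᵀ X A(i) + C(i)ᵀ C(i)`. -/
def opL {n p N : ℕ} (Am : Fin N → Matrix (Fin n) (Fin n) ℝ)
    (Cm : Fin N → Matrix (Fin p) (Fin n) ℝ) (i : Fin N) (X : Matrix (Fin n) (Fin n) ℝ) :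
    Matrix (Fin n) (Fin n) ℝ :=
  (Am i)ᵀ * X * Am i + (Cm i)ᵀ * Cm i

/-- `ℛ(i,X) = B(i)ᵀ X A(i) + D(i)ᵀ C(i)`. -/
def opR {n m p N : ℕ} (Am : Fin N → Matrix (Fin n) (Fin n) ℝ)
    (Bm : Fin N → Matrix (Fin n) (Fin m) ℝ) (Cm : Fin N → Matrix (Fin p) (Fin n) ℝ)
    (Dm : Fin N → Matrix (Fin p) (Fin m) ℝ) (i : Fin N) (X : Matrix (Fin n) (Fin n) ℝ) :
    Matrix (Fin m) (Fin n) ℝ :=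
  (Bm i)ᵀ * X * Am i + (Dm i)ᵀ * Cm i

/-- `𝒲(i,X) = I − B(i)ᵀ X B(i) − D(i)ᵀ D(i)`. -/
def opW {n m p N : ℕ} (Bm : Fin N → Matrix (Fin n) (Fin m) ℝ)
    (Dm : Fin N → Matrix (Fin p) (Fin m) ℝ) (i : Fin N) (X : Matrix (Fin n) (Fin n) ℝ) :
    Matrix (Fin m) (Fin m) ℝ :=
  1 - (Bm i)ᵀ * X * Bm i - (Dm i)ᵀ * Dm i

/-- `𝒮(i,X) = ℒ(i,X) + ℛ(i,X)ᵀ 𝒲(i,X)⁻¹ ℛ(i,X)`. -/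
def opS {n m p N : ℕ} (Am : Fin N → Matrix (Fin n) (Fin n) ℝ)
    (Bm : Fin N → Matrix (Fin n) (Fin m) ℝ) (Cm : Fin N → Matrix (Fin p) (Fin n) ℝ)
    (Dm : Fin N → Matrix (Fin p) (Fin m) ℝ) (i : Fin N) (X : Matrix (Fin n) (Fin n) ℝ) :
    Matrix (Fin n) (Fin n) ℝ :=
  opL Am Cm i X + (opR Am Bm Cm Dm i X)ᵀ * (opW Bm Dm i X)⁻¹ * opR Am Bm Cm Dm i X

/-- `ℱ(i,X) = A(i) + B(i) 𝒲(i,X)⁻¹ ℛ(i,X)`. -/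
def opF {n m p N : ℕ} (Am : Fin N → Matrix (Fin n) (Fin n) ℝ)
    (Bm : Fin N → Matrix (Fin n) (Fin m) ℝ) (Cm : Fin N → Matrix (Fin p) (Fin n) ℝ)
    (Dm : Fin N → Matrix (Fin p) (Fin m) ℝ) (i : Fin N) (X : Matrix (Fin n) (Fin n) ℝ) :
    Matrix (Fin n) (Fin n) ℝ :=
  Am i + Bm i * (opW Bm Dm i X)⁻¹ * opR Am Bm Cm Dm i X

/-- Backwards recursion for the perturbed finite-horizon Riccati difference equation,
indexed by the number `d = T + 1 − k` of remaining steps. -/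
def ricAuxE {n m p N J : ℕ} (Am : Fin N → Matrix (Fin n) (Fin n) ℝ)
    (Bm : Fin N → Matrix (Fin n) (Fin m) ℝ) (Cm : Fin N → Matrix (Fin p) (Fin n) ℝ)
    (Dm : Fin N → Matrix (Fin p) (Fin m) ℝ) (Pm : Fin J → Matrix (Fin N) (Fin N) ℝ)
    (ψ : ℕ → Fin J) (T : ℕ) (ε : ℝ) : ℕ → Fin N → Matrix (Fin n) (Fin n) ℝ
  | 0, _ => 0
  | d + 1, i =>
      opS Am Bm Cm Dm i
          (∑ j, Pm (ψ (T - d + 1)) i j • ricAuxE Am Bm Cm Dm Pm ψ T ε d j) + ε • 1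

/-- The perturbed finite-horizon Riccati solution `X_ψ(i,k,T,ε)`:
`X_ψ(i,T+1,T,ε) = 0` and `X_ψ(i,k,T,ε) = 𝒮(i, X̃_ψ(i,k+1,T,ε)) + εI` where
`X̃_ψ(i,k+1,T,ε) = Σ_j π_{ij}(ψ(k+1)) X_ψ(j,k+1,T,ε)`. -/
def ricE {n m p N J : ℕ} (Am : Fin N → Matrix (Fin n) (Fin n) ℝ)
    (Bm : Fin N → Matrix (Fin n) (Fin m) ℝ) (Cm : Fin N → Matrix (Fin p) (Fin n) ℝ)
    (Dm : Fin N → Matrix (Fin p) (Fin m) ℝ) (Pm : Fin J → Matrix (Fin N) (Fin N) ℝ)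
    (ψ : ℕ → Fin J) (i : Fin N) (k T : ℕ) (ε : ℝ) : Matrix (Fin n) (Fin n) ℝ :=
  ricAuxE Am Bm Cm Dm Pm ψ T ε (T + 1 - k) i

/-- The (unperturbed) finite-horizon Riccati solution `X_ψ(i,k,T)`. -/
def ric {n m p N J : ℕ} (Am : Fin N → Matrix (Fin n) (Fin n) ℝ)
    (Bm : Fin N → Matrix (Fin n) (Fin m) ℝ) (Cm : Fin N → Matrix (Fin p) (Fin n) ℝ)
    (Dm : Fin N → Matrix (Fin p) (Fin m) ℝ) (Pm : Fin J → Matrix (Fin N) (Fin N) ℝ)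
    (ψ : ℕ → Fin J) (i : Fin N) (k T : ℕ) : Matrix (Fin n) (Fin n) ℝ :=
  ricE Am Bm Cm Dm Pm ψ i k T 0

/-- `ℬ(i,X,Y) = [[A,B],[C,D]]ᵀ diag(X,I) [[A,B],[C,D]] − diag(Y,I)`. -/
def bigB {n m p N : ℕ} (Am : Fin N → Matrix (Fin n) (Fin n) ℝ)
    (Bm : Fin N → Matrix (Fin n) (Fin m) ℝ) (Cm : Fin N → Matrix (Fin p) (Fin n) ℝ)
    (Dm : Fin N → Matrix (Fin p) (Fin m) ℝ) (i : Fin N)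
    (X Y : Matrix (Fin n) (Fin n) ℝ) : Matrix (Fin n ⊕ Fin m) (Fin n ⊕ Fin m) ℝ :=
  (Matrix.fromBlocks (Am i) (Bm i) (Cm i) (Dm i))ᵀ *
      Matrix.fromBlocks X 0 0 (1 : Matrix (Fin p) (Fin p) ℝ) *
      Matrix.fromBlocks (Am i) (Bm i) (Cm i) (Dm i) -
    Matrix.fromBlocks Y 0 0 (1 : Matrix (Fin m) (Fin m) ℝ)

/-- The switching window `ψ_M(k) = (ψ(k+1), …, ψ(k+M))`. -/
def window {J : ℕ} (ψ : ℕ → Fin J) (M k : ℕ) : Fin M → Fin J :=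
  fun l => ψ (k + (l : ℕ) + 1)

/-- `Ψ_M`, the set of all windows of length `M` occurring in `Ψ`. -/
def windowSet {J : ℕ} (Ψ : Set (ℕ → Fin J)) (M : ℕ) : Set (Fin M → Fin J) :=
  { r | ∃ ψ ∈ Ψ, ∃ t : ℕ, r = window ψ M t }

/-- Closed-loop matrix `ℱ(i, X̃_ψ(i, l+1, T, ε))` at time `l`. -/
def Fcl {n m p N J : ℕ} (Am : Fin N → Matrix (Fin n) (Fin n) ℝ)
    (Bm : Fin N → Matrix (Fin n) (Fin m) ℝ) (Cm : Fin N → Matrix (Fin p) (Fin n) ℝ)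
    (Dm : Fin N → Matrix (Fin p) (Fin m) ℝ) (Pm : Fin J → Matrix (Fin N) (Fin N) ℝ)
    (ψ : ℕ → Fin J) (T : ℕ) (ε : ℝ) (i : Fin N) (l : ℕ) : Matrix (Fin n) (Fin n) ℝ :=
  opF Am Bm Cm Dm i (∑ j, Pm (ψ (l + 1)) i j • ricE Am Bm Cm Dm Pm ψ j (l + 1) T ε)

/-- Ordered closed-loop product `φ = F(t(d−1), j+d−1) ⋯ F(t 0, j)`. -/
def clPathProd {n N : ℕ} (F : Fin N → ℕ → Matrix (Fin n) (Fin n) ℝ) (j : ℕ) {d : ℕ}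
    (t : Fin d → Fin N) : Matrix (Fin n) (Fin n) ℝ :=
  (((List.finRange d).reverse).map fun l => F (t l) (j + (l : ℕ))).prod

/-- Closed-loop conditional second moment `H_ψ(i,j,k,T,ε)`. -/
def Hmat {n m p N J : ℕ} (Am : Fin N → Matrix (Fin n) (Fin n) ℝ)
    (Bm : Fin N → Matrix (Fin n) (Fin m) ℝ) (Cm : Fin N → Matrix (Fin p) (Fin n) ℝ)
    (Dm : Fin N → Matrix (Fin p) (Fin m) ℝ) (Pm : Fin J → Matrix (Fin N) (Fin N) ℝ)
    (ψ : ℕ → Fin J) (T : ℕ) (ε : ℝ) (i : Fin N) (j k : ℕ) :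
    Matrix (Fin n) (Fin n) ℝ :=
  if k ≤ j then 1
  else
    ∑ t : Fin (k - j - 1 + 1) → Fin N,
      (if t 0 = i then
          ∏ l : Fin (k - j - 1), Pm (ψ (j + (l : ℕ) + 1)) (t l.castSucc) (t l.succ)
        else 0) •
        ((clPathProd (Fcl Am Bm Cm Dm Pm ψ T ε) j t)ᵀ *
          clPathProd (Fcl Am Bm Cm Dm Pm ψ T ε) j t)

/-- `Y_ψ(i,k) = Σ_{j=k}^{k+M+1} E[Φ(j,k)ᵀΦ(j,k) ∣ θ(k)=i]`. -/
def Ysum {n N J : ℕ} (Am : Fin N → Matrix (Fin n) (Fin n) ℝ)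
    (Pm : Fin J → Matrix (Fin N) (Fin N) ℝ) (ψ : ℕ → Fin J) (M : ℕ) (i : Fin N)
    (k : ℕ) : Matrix (Fin n) (Fin n) ℝ :=
  ∑ j ∈ Finset.range (M + 2), Gmat Am Pm ψ i k (k + j)

/-!
Write `𝒯_s W (i) = A(i)ᵀ (Σ_{i'} π_{ii'}(s) W(i')) A(i)`. Then
`G_ψ(·, j, j + d) = 𝒯_{ψ(j+1)} ⋯ 𝒯_{ψ(j+d)} I`, which depends on `ψ` only through a window of
switching values.

If the system is UEMSS, pick `M` with `c λ^(M+1) < 1`. The truncated sum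
`X(·, r) = Σ_{d ≤ M} 𝒯_{r₁} ⋯ 𝒯_{r_d} I` telescopes to
`X − 𝒯X = I − G(·, t, t+M+1) ≥ (1 − c λ^(M+1)) I`.

Conversely, there are only finitely many windows. This gives uniform bounds `α I ≤ X ≤ B I` and
`X − 𝒯X ≥ δ I`, hence `𝒯X ≤ (1 − δ/B) X`. Iterating gives
`α G(i, j, j+d) ≤ (1 − δ/B)^d X ≤ (1 − δ/B)^d B I`.
-/

open scoped MatrixOrder ComplexOrder

section LoewnerBounds

variable {ι 𝕜 : Type*} [Fintype ι] [DecidableEq ι] [RCLike 𝕜]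

theorem _root_.Matrix.PosDef.exists_pos_smul_one_le {A : Matrix ι ι 𝕜} (hA : A.PosDef) :
    ∃ r : ℝ, 0 < r ∧ r • (1 : Matrix ι ι 𝕜) ≤ A := by
  simp_rw [← Algebra.algebraMap_eq_smul_one]
  rcases subsingleton_or_nontrivial (Matrix ι ι 𝕜) with _ | _
  · exact ⟨1, one_pos, (Subsingleton.elim _ _).le⟩
  · exact (CFC.exists_pos_algebraMap_le_iff hA.isHermitian.isSelfAdjoint).2
      fun _ hx => hA.isStrictlyPositive.spectrum_pos hx

theorem _root_.Matrix.IsHermitian.exists_le_smul_one {A : Matrix ι ι 𝕜} (hA : A.IsHermitian) :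
    ∃ r : ℝ, A ≤ r • (1 : Matrix ι ι 𝕜) := by
  simp_rw [← Algebra.algebraMap_eq_smul_one]
  obtain ⟨r, hr⟩ := (isCompact_iff_compactSpace.mpr inferInstance :
    IsCompact (spectrum ℝ A)).bddAbove
  exact ⟨r, le_algebraMap_of_spectrum_le hr hA.isSelfAdjoint⟩

theorem _root_.Matrix.exists_pos_smul_one_le_of_finite {κ : Type*} [Finite κ]
    {A : κ → Matrix ι ι 𝕜} (hA : ∀ k, (A k).PosDef) :
    ∃ r : ℝ, 0 < r ∧ ∀ k, r • (1 : Matrix ι ι 𝕜) ≤ A k := by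
  choose r hr using fun k => (hA k).exists_pos_smul_one_le
  obtain ⟨⟨ε, hε⟩, hεr⟩ := Finite.exists_ge fun k => (⟨r k, (hr k).1⟩ : Set.Ioi (0 : ℝ))
  exact ⟨ε, hε, fun k =>
    (smul_le_smul_of_nonneg_right (show ε ≤ r k from hεr k) zero_le_one).trans (hr k).2⟩

theorem _root_.Matrix.exists_le_smul_one_of_finite {κ : Type*} [Finite κ]
    {A : κ → Matrix ι ι 𝕜} (hA : ∀ k, (A k).IsHermitian) :
    ∃ r : ℝ, ∀ k, A k ≤ r • (1 : Matrix ι ι 𝕜) := by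
  choose r hr using fun k => (hA k).exists_le_smul_one
  obtain ⟨R, hR⟩ := Finite.exists_le r
  exact ⟨R, fun k => (hr k).trans (smul_le_smul_of_nonneg_right (hR k) zero_le_one)⟩

end LoewnerBounds

theorem _root_.le_one_sub_div_smul_of_smul_le_sub {A : Type*} [AddCommGroup A] [PartialOrder A]
    [IsOrderedAddMonoid A] [Module ℝ A] [PosSMulMono ℝ A] {X Y E : A} {β δ : ℝ}
    (hβ : 0 < β) (hδ : 0 ≤ δ) (hX : X ≤ β • E) (hXY : δ • E ≤ X - Y) :
    Y ≤ (1 - δ / β) • X := by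
  have hδX : (δ / β) • X ≤ X - Y :=
    calc (δ / β) • X ≤ (δ / β) • β • E := smul_le_smul_of_nonneg_left hX (by positivity)
      _ = δ • E := by rw [smul_smul, div_mul_cancel₀ _ hβ.ne']
      _ ≤ X - Y := hXY
  rw [sub_smul, one_smul]
  exact le_sub_comm.mp hδX

theorem _root_.Fin.sum_univ_fun_succ {α β : Type*} [Fintype α] [AddCommMonoid β] {d : ℕ}
    (f : (Fin (d + 1) → α) → β) : ∑ t, f t = ∑ a, ∑ s : Fin d → α, f (Fin.cons a s) := by
  rw [← (Fin.consEquiv fun _ => α).sum_comp, Fintype.sum_prod_type]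
  rfl

section Windows

variable {J : ℕ} (ψ : ℕ → Fin J)

theorem window_succ (M t : ℕ) :
    (fun l : Fin M => window ψ (M + 1) t l.succ) = window ψ M (t + 1) := by
  funext l
  simp only [window, Fin.val_succ]
  congr 1
  omega

theorem ofFn_window_succ (d j : ℕ) :
    List.ofFn (window ψ (d + 1) j) = ψ (j + 1) :: List.ofFn (window ψ d (j + 1)) := by
  rw [List.ofFn_succ, window_succ]
  rfl

end Windows

section SecondMoment

variable {n N J : ℕ} (Am : Fin N → Matrix (Fin n) (Fin n) ℝ)
  (Pm : Fin J → Matrix (Fin N) (Fin N) ℝ)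

def transfer (s : Fin J) :
    (Fin N → Matrix (Fin n) (Fin n) ℝ) →ₗ[ℝ] (Fin N → Matrix (Fin n) (Fin n) ℝ) where
  toFun W i := (Am i)ᵀ * (∑ i', Pm s i i' • W i') * Am i
  map_add' W W' := by
    ext1 i
    simp only [Pi.add_apply, smul_add, Finset.sum_add_distrib, Matrix.mul_add, Matrix.add_mul]
  map_smul' c W := by
    ext1 i
    simp only [Pi.smul_apply, smul_comm _ c, ← Finset.smul_sum, Matrix.mul_smul,
      Matrix.smul_mul, RingHom.id_apply]

theorem transfer_apply (s : Fin J) (W : Fin N → Matrix (Fin n) (Fin n) ℝ) (i : Fin N) :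
    transfer Am Pm s W i = (Am i)ᵀ * (∑ i', Pm s i i' • W i') * Am i :=
  rfl

theorem transfer_mono (hPnn : ∀ (s : Fin J) (i j : Fin N), 0 ≤ Pm s i j) (s : Fin J)
    {W W' : Fin N → Matrix (Fin n) (Fin n) ℝ} (h : W ≤ W') :
    transfer Am Pm s W ≤ transfer Am Pm s W' := fun i => by
  have hsum : ∑ i', Pm s i i' • W i' ≤ ∑ i', Pm s i i' • W' i' :=
    Finset.sum_le_sum fun i' _ => smul_le_smul_of_nonneg_left (h i') (hPnn s i i')
  simpa only [transfer_apply, Matrix.star_eq_conjTranspose,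
    Matrix.conjTranspose_eq_transpose_of_trivial] using star_left_conjugate_le_conjugate hsum (Am i)

/-- `moment [s₁, …, s_d] i = E[ΦᵀΦ ∣ θ(0) = i]` for the product `Φ` of `d` factors `A(θ(l))`
along a chain with transition matrices `Π(s₁), Π(s₂), …`; the last one, `Π(s_d)`, enters only
through its row sums. -/
def moment : List (Fin J) → Fin N → Matrix (Fin n) (Fin n) ℝ
  | [] => 1
  | s :: ss => transfer Am Pm s (moment ss)

theorem moment_nonneg (hPnn : ∀ (s : Fin J) (i j : Fin N), 0 ≤ Pm s i j) :
    ∀ ss : List (Fin J), 0 ≤ moment Am Pm ss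
  | [] => fun _ => zero_le_one
  | s :: ss => by
    simpa only [moment, map_zero] using transfer_mono Am Pm hPnn s (moment_nonneg hPnn ss)

def pathWeight (ψ : ℕ → Fin J) (j : ℕ) {d : ℕ} (t : Fin (d + 1) → Fin N) : ℝ :=
  ∏ l : Fin d, Pm (ψ (j + (l : ℕ) + 1)) (t l.castSucc) (t l.succ)

/-- `Gmat` with its number of factors as an explicit parameter, rather than the truncated
difference `k - j` inside a dependent type. -/
def pathSum (ψ : ℕ → Fin J) (d j : ℕ) (i : Fin N) : Matrix (Fin n) (Fin n) ℝ :=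
  ∑ t : Fin (d + 1) → Fin N,
    (if t 0 = i then pathWeight Pm ψ j t else 0) • ((pathProd Am t)ᵀ * pathProd Am t)

theorem Gmat_eq_pathSum (ψ : ℕ → Fin J) (i : Fin N) {j k : ℕ} (h : j < k) :
    Gmat Am Pm ψ i j k = pathSum Am Pm ψ (k - j - 1) j i := by
  rw [Gmat, if_neg (by omega)]
  rfl

theorem pathProd_cons {d : ℕ} (a : Fin N) (s : Fin d → Fin N) :
    pathProd Am (Fin.cons a s) = pathProd Am s * Am a := by
  unfold pathProd
  rw [List.finRange_succ, List.reverse_cons, List.map_append, List.prod_append,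
    List.map_reverse, List.map_map, List.map_reverse]
  simp [Function.comp_def]

theorem pathWeight_cons_cons (ψ : ℕ → Fin J) (j : ℕ) {d : ℕ} (a b : Fin N)
    (s : Fin d → Fin N) :
    pathWeight Pm ψ j (Fin.cons a (Fin.cons b s)) =
      Pm (ψ (j + 1)) a b * pathWeight Pm ψ (j + 1) (Fin.cons b s) := by
  rw [pathWeight, Fin.prod_univ_succ]
  congr 1
  refine Finset.prod_congr rfl fun l _ => ?_
  rw [Fin.val_succ, show j + (l + 1) + 1 = j + 1 + l + 1 by omega, ← Fin.succ_castSucc,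
    Fin.cons_succ, Fin.cons_succ]

theorem pathSum_eq_sum_cons (ψ : ℕ → Fin J) (d j : ℕ) (i : Fin N) :
    pathSum Am Pm ψ d j i = ∑ s : Fin d → Fin N,
      pathWeight Pm ψ j (Fin.cons i s) •
        ((pathProd Am (Fin.cons i s))ᵀ * pathProd Am (Fin.cons i s)) := by
  rw [pathSum, Fin.sum_univ_fun_succ, Fintype.sum_eq_single i fun a ha => by simp [ha]]
  simp

theorem pathSum_zero (ψ : ℕ → Fin J) (j : ℕ) (i : Fin N) :
    pathSum Am Pm ψ 0 j i = (Am i)ᵀ * Am i := by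
  simp only [pathSum_eq_sum_cons, pathProd_cons]
  simp [pathWeight, pathProd]

theorem pathSum_succ (ψ : ℕ → Fin J) (d j : ℕ) (i : Fin N) :
    pathSum Am Pm ψ (d + 1) j i =
      transfer Am Pm (ψ (j + 1)) (pathSum Am Pm ψ d (j + 1)) i := by
  simp_rw [transfer_apply, pathSum_eq_sum_cons, Fin.sum_univ_fun_succ (d := d),
    pathWeight_cons_cons, pathProd_cons Am i, Matrix.transpose_mul, Finset.smul_sum,
    Matrix.mul_sum, Matrix.sum_mul, smul_smul, Matrix.mul_smul, Matrix.smul_mul,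
    Matrix.mul_assoc]

theorem pathSum_eq_moment (hProw : ∀ (s : Fin J) (i : Fin N), ∑ j, Pm s i j = 1)
    (ψ : ℕ → Fin J) (d j : ℕ) (i : Fin N) :
    pathSum Am Pm ψ d j i = moment Am Pm (List.ofFn (window ψ (d + 1) j)) i := by
  induction d generalizing j i with
  | zero =>
    rw [pathSum_zero, ofFn_window_succ]
    simp [moment, transfer_apply, ← Finset.sum_smul, hProw]
  | succ d ih =>
    rw [pathSum_succ, ofFn_window_succ, moment, ← funext (ih (j + 1))]

theorem Gmat_add_eq_moment (hProw : ∀ (s : Fin J) (i : Fin N), ∑ j, Pm s i j = 1)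
    (ψ : ℕ → Fin J) (i : Fin N) (j d : ℕ) :
    Gmat Am Pm ψ i j (j + d) = moment Am Pm (List.ofFn (window ψ d j)) i := by
  cases d with
  | zero => simp [Gmat, moment]
  | succ d =>
    rw [Gmat_eq_pathSum Am Pm ψ i (by omega), show j + (d + 1) - j - 1 = d by omega,
      pathSum_eq_moment Am Pm hProw]

def momentSum (M : ℕ) (ss : List (Fin J)) : Fin N → Matrix (Fin n) (Fin n) ℝ :=
  ∑ d ∈ Finset.range (M + 1), moment Am Pm (ss.take d)

theorem momentSum_posDef (hPnn : ∀ (s : Fin J) (i j : Fin N), 0 ≤ Pm s i j) (M : ℕ)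
    (ss : List (Fin J)) (i : Fin N) : (momentSum Am Pm M ss i).PosDef := by
  rw [momentSum, Finset.sum_range_succ', List.take_zero, add_comm]
  exact Matrix.PosDef.one.add_posSemidef
    ((Finset.sum_nonneg fun d _ => moment_nonneg Am Pm hPnn _) i).posSemidef

theorem momentSum_take (M : ℕ) (ss : List (Fin J)) :
    momentSum Am Pm M (ss.take M) = momentSum Am Pm M ss :=
  Finset.sum_congr rfl fun d hd => by
    rw [List.take_take, min_eq_left (Nat.lt_succ_iff.mp (Finset.mem_range.mp hd))]

theorem momentSum_cons (M : ℕ) (s : Fin J) (ss : List (Fin J)) :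
    momentSum Am Pm M (s :: ss) + moment Am Pm ((s :: ss).take (M + 1)) =
      1 + transfer Am Pm s (momentSum Am Pm M ss) := by
  rw [momentSum, momentSum, ← Finset.sum_range_succ, Finset.sum_range_succ', add_comm, map_sum]
  simp [List.take_succ_cons, moment]

/-- The telescoping identity behind the Lyapunov function `X(·, r) = momentSum M r`. -/
theorem momentSum_sub_transfer (M : ℕ) (r : Fin (M + 1) → Fin J) :
    momentSum Am Pm M (List.ofFn fun l => r l.castSucc) -
        transfer Am Pm (r 0) (momentSum Am Pm M (List.ofFn fun l => r l.succ)) =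
      1 - moment Am Pm (List.ofFn r) := by
  have h := momentSum_cons Am Pm M (r 0) (List.ofFn fun l => r l.succ)
  rw [← List.ofFn_succ, List.take_of_length_le (by simp)] at h
  have hinit : (List.ofFn fun l : Fin M => r l.castSucc) = (List.ofFn r).take M :=
    Fin.ofFn_take_eq_take_ofFn M.le_succ r
  rw [hinit, momentSum_take, sub_eq_sub_iff_add_eq_add, h]

theorem smul_moment_le_pow_smul (hPnn : ∀ (s : Fin J) (i j : Fin N), 0 ≤ Pm s i j)
    {ψ : ℕ → Fin J} {V : ℕ → Fin N → Matrix (Fin n) (Fin n) ℝ} {α lam : ℝ} (hlam : 0 ≤ lam)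
    (hV₀ : ∀ t, α • 1 ≤ V t) (hV : ∀ t, transfer Am Pm (ψ (t + 1)) (V (t + 1)) ≤ lam • V t)
    (d j : ℕ) : α • moment Am Pm (List.ofFn (window ψ d j)) ≤ lam ^ d • V j := by
  induction d generalizing j with
  | zero => simpa [moment] using hV₀ j
  | succ d ih =>
    rw [ofFn_window_succ, moment, ← map_smul]
    calc transfer Am Pm (ψ (j + 1)) (α • moment Am Pm (List.ofFn (window ψ d (j + 1))))
        ≤ transfer Am Pm (ψ (j + 1)) (lam ^ d • V (j + 1)) :=
          transfer_mono Am Pm hPnn _ (ih (j + 1))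
      _ = lam ^ d • transfer Am Pm (ψ (j + 1)) (V (j + 1)) := map_smul _ _ _
      _ ≤ lam ^ d • lam • V j := smul_le_smul_of_nonneg_left (hV j) (pow_nonneg hlam d)
      _ = lam ^ (d + 1) • V j := by rw [smul_smul, pow_succ]

theorem Gmat_add_le_of_lyapunov (hPnn : ∀ (s : Fin J) (i j : Fin N), 0 ≤ Pm s i j)
    (hProw : ∀ (s : Fin J) (i : Fin N), ∑ j, Pm s i j = 1) {ψ : ℕ → Fin J}
    {V : ℕ → Fin N → Matrix (Fin n) (Fin n) ℝ} {α B lam : ℝ} (hα : 0 < α) (hlam : 0 ≤ lam)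
    (hV₀ : ∀ t, α • 1 ≤ V t) (hVB : ∀ t, V t ≤ B • 1)
    (hV : ∀ t, transfer Am Pm (ψ (t + 1)) (V (t + 1)) ≤ lam • V t) (i : Fin N) (j d : ℕ) :
    Gmat Am Pm ψ i j (j + d) ≤ (B / α * lam ^ d) • 1 := by
  rw [Gmat_add_eq_moment Am Pm hProw]
  calc moment Am Pm (List.ofFn (window ψ d j)) i
      = α⁻¹ • (α • moment Am Pm (List.ofFn (window ψ d j))) i := by
        rw [Pi.smul_apply, smul_smul, inv_mul_cancel₀ hα.ne', one_smul]
    _ ≤ α⁻¹ • (lam ^ d • B • (1 : Fin N → Matrix (Fin n) (Fin n) ℝ)) i := by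
        gcongr
        exact (smul_moment_le_pow_smul Am Pm hPnn hlam hV₀ hV d j).trans
          (smul_le_smul_of_nonneg_left (hVB j) (pow_nonneg hlam d)) i
    _ = (B / α * lam ^ d) • 1 := by
        simp only [Pi.smul_apply, Pi.one_apply, smul_smul]
        ring_nf

end SecondMoment

section Stability

variable {n N J : ℕ} (Am : Fin N → Matrix (Fin n) (Fin n) ℝ)
  (Pm : Fin J → Matrix (Fin N) (Fin N) ℝ)

theorem exists_lyapunov_of_uemss (hPnn : ∀ (s : Fin J) (i j : Fin N), 0 ≤ Pm s i j)
    (hProw : ∀ (s : Fin J) (i : Fin N), ∑ j, Pm s i j = 1) {Ψ : Set (ℕ → Fin J)}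
    (h : UEMSS Am Pm Ψ) :
    ∃ (M : ℕ) (X : Fin N → (Fin M → Fin J) → Matrix (Fin n) (Fin n) ℝ),
      (∀ (i : Fin N) (r : Fin M → Fin J), r ∈ windowSet Ψ M → (X i r).PosDef) ∧
      ∀ r ∈ windowSet Ψ (M + 1), ∀ i : Fin N,
        (X i (fun l => r l.castSucc) -
          (Am i)ᵀ * (∑ j, Pm (r 0) i j • X j (fun l => r l.succ)) * Am i).PosDef := by
  obtain ⟨c, lam, hc, hlam0, hlam1, hstab⟩ := h
  have hc0 : 0 < c := zero_lt_one.trans_le hc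
  obtain ⟨M, hM⟩ : ∃ M : ℕ, c * lam ^ (M + 1) < 1 := by
    obtain ⟨M, hM⟩ := exists_pow_lt_of_lt_one (inv_pos.2 hc0) hlam1
    refine ⟨M, ?_⟩
    calc c * lam ^ (M + 1) ≤ c * lam ^ M :=
          mul_le_mul_of_nonneg_left (pow_le_pow_of_le_one hlam0 hlam1.le M.le_succ) hc0.le
      _ < c * c⁻¹ := mul_lt_mul_of_pos_left hM hc0
      _ = 1 := mul_inv_cancel₀ hc0.ne'
  refine ⟨M, fun i r => momentSum Am Pm M (List.ofFn r) i,
    fun i r _ => momentSum_posDef Am Pm hPnn M _ i, ?_⟩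
  rintro r ⟨ψ, hψ, t, rfl⟩ i
  have hG := hstab ψ hψ i t (t + (M + 1)) (Nat.le_add_right _ _)
  rw [Nat.add_sub_cancel_left] at hG
  convert_to (1 - Gmat Am Pm ψ i t (t + (M + 1))).PosDef using 1
  · rw [Gmat_add_eq_moment Am Pm hProw]
    exact congrFun (momentSum_sub_transfer Am Pm M (window ψ (M + 1) t)) i
  have hsplit : 1 - Gmat Am Pm ψ i t (t + (M + 1)) = (1 - c * lam ^ (M + 1)) • 1 +
      ((c * lam ^ (M + 1)) • 1 - Gmat Am Pm ψ i t (t + (M + 1))) := by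
    rw [sub_smul, one_smul]
    abel
  rw [hsplit]
  exact (Matrix.PosDef.one.smul (sub_pos.2 hM)).add_posSemidef hG

theorem uemss_of_lyapunov (hPnn : ∀ (s : Fin J) (i j : Fin N), 0 ≤ Pm s i j)
    (hProw : ∀ (s : Fin J) (i : Fin N), ∑ j, Pm s i j = 1) {Ψ : Set (ℕ → Fin J)} (M : ℕ)
    (X : Fin N → (Fin M → Fin J) → Matrix (Fin n) (Fin n) ℝ)
    (hX : ∀ (i : Fin N) (r : Fin M → Fin J), r ∈ windowSet Ψ M → (X i r).PosDef)
    (hXdec : ∀ r ∈ windowSet Ψ (M + 1), ∀ i : Fin N,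
      (X i (fun l => r l.castSucc) -
        (Am i)ᵀ * (∑ j, Pm (r 0) i j • X j (fun l => r l.succ)) * Am i).PosDef) :
    UEMSS Am Pm Ψ := by
  obtain ⟨α, hα, hαX⟩ := Matrix.exists_pos_smul_one_le_of_finite
    (A := fun p : {p : Fin N × (Fin M → Fin J) // p.2 ∈ windowSet Ψ M} => X p.1.1 p.1.2)
    fun p => hX _ _ p.2
  obtain ⟨β, hβX⟩ := Matrix.exists_le_smul_one_of_finite
    (A := fun p : {p : Fin N × (Fin M → Fin J) // p.2 ∈ windowSet Ψ M} => X p.1.1 p.1.2)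
    fun p => (hX _ _ p.2).isHermitian
  obtain ⟨δ, hδ, hδX⟩ := Matrix.exists_pos_smul_one_le_of_finite
    (A := fun p : {p : Fin N × (Fin (M + 1) → Fin J) // p.2 ∈ windowSet Ψ (M + 1)} =>
      X p.1.1 (fun l => p.1.2 l.castSucc) -
        transfer Am Pm (p.1.2 0) (fun j => X j (fun l => p.1.2 l.succ)) p.1.1)
    fun p => hXdec _ p.2 _
  -- `B ≥ α` makes `c = B / α ≥ 1`, and `B ≥ δ` makes `λ = 1 - δ / B ≥ 0`.
  set B := max β (max α δ)
  have hαB : α ≤ B := le_max_of_le_right (le_max_left _ _)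
  have hδB : δ ≤ B := le_max_of_le_right (le_max_right _ _)
  have hB : 0 < B := hα.trans_le hαB
  set lam := 1 - δ / B
  have hlam : 0 ≤ lam := sub_nonneg.2 ((div_le_one hB).2 hδB)
  refine ⟨B / α, lam, (one_le_div hα).2 hαB, hlam, sub_lt_self _ (div_pos hδ hB), ?_⟩
  rintro ψ hψ i j k hjk
  obtain ⟨d, rfl⟩ := Nat.exists_eq_add_of_le hjk
  set V : ℕ → Fin N → Matrix (Fin n) (Fin n) ℝ := fun t i => X i (window ψ M t)
  have hVB : ∀ t, V t ≤ B • 1 := fun t i =>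
    (hβX ⟨(i, window ψ M t), ψ, hψ, t, rfl⟩).trans
      (smul_le_smul_of_nonneg_right (le_max_left _ _) zero_le_one)
  have hV : ∀ t, transfer Am Pm (ψ (t + 1)) (V (t + 1)) ≤ lam • V t := fun t i => by
    have h := hδX ⟨(i, window ψ (M + 1) t), ψ, hψ, t, rfl⟩
    simp only [window_succ] at h
    exact le_one_sub_div_smul_of_smul_le_sub hB hδ.le (hVB t i) h
  rw [Nat.add_sub_cancel_left, ← Matrix.le_iff]
  exact Gmat_add_le_of_lyapunov Am Pm hPnn hProw hα hlam
    (fun t i => hαX ⟨(i, window ψ M t), ψ, hψ, t, rfl⟩) hVB hV i j d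

end Stability

theorem statement0_general (n N J : ℕ) (Am : Fin N → Matrix (Fin n) (Fin n) ℝ)
    (Pm : Fin J → Matrix (Fin N) (Fin N) ℝ) (Ψ : Set (ℕ → Fin J))
    (hPnn : ∀ (s : Fin J) (i j : Fin N), 0 ≤ Pm s i j)
    (hProw : ∀ (s : Fin J) (i : Fin N), ∑ j, Pm s i j = 1) :
    UEMSS Am Pm Ψ ↔
      ∃ (M : ℕ) (X : Fin N → (Fin M → Fin J) → Matrix (Fin n) (Fin n) ℝ),
        (∀ (i : Fin N) (r : Fin M → Fin J), r ∈ windowSet Ψ M → (X i r).PosDef) ∧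
        ∀ r ∈ windowSet Ψ (M + 1), ∀ i : Fin N,
          (X i (fun l => r l.castSucc) -
            (Am i)ᵀ * (∑ j, Pm (r 0) i j • X j (fun l => r l.succ)) * Am i).PosDef := by
  constructor
  · exact exists_lyapunov_of_uemss Am Pm hPnn hProw
  · rintro ⟨M, X, hX, hXdec⟩
    exact uemss_of_lyapunov Am Pm hPnn hProw M X hX hXdec

/-- The switched Markov jump linear system `(𝒢,Π,Ψ)` is uniformly
exponentially mean square stable iff there exist `M ∈ ℕ₀` and a function `X` assigning to each
`(i, r) ∈ 𝒩 × Ψ_M` a symmetric positive definite matrix such that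
`A(i)ᵀ (Σ_j π_{ij}(r₁) X(j, r₂…r_{M+1})) A(i) − X(i, r₁…r_M)` is negative definite for every
`(r₁,…,r_{M+1}) ∈ Ψ_{M+1}` and every `i ∈ 𝒩`. -/
theorem statement0 (n N J : ℕ) (Am : Fin N → Matrix (Fin n) (Fin n) ℝ)
    (Pm : Fin J → Matrix (Fin N) (Fin N) ℝ) (Ψ : Set (ℕ → Fin J)) (hΨ : Ψ.Nonempty)
    (hPnn : ∀ (s : Fin J) (i j : Fin N), 0 ≤ Pm s i j)
    (hProw : ∀ (s : Fin J) (i : Fin N), ∑ j, Pm s i j = 1) :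
    UEMSS Am Pm Ψ ↔
      ∃ (M : ℕ) (X : Fin N → (Fin M → Fin J) → Matrix (Fin n) (Fin n) ℝ),
        (∀ (i : Fin N) (r : Fin M → Fin J), r ∈ windowSet Ψ M → (X i r).PosDef) ∧
        ∀ r ∈ windowSet Ψ (M + 1), ∀ i : Fin N,
          (X i (fun l => r l.castSucc) -
            (Am i)ᵀ * (∑ j, Pm (r 0) i j • X j (fun l => r l.succ)) * Am i).PosDef :=
  statement0_general n N J Am Pm Ψ hPnn hProw

end SMJLS
end
end

section
/- Let A ∈ ℝ^{n×n}, B ∈ ℝ^{n×m}, C ∈ ℝ^{p×n}, D ∈ ℝ^{p×m}. For a symmetric n×n matrix X set ℒ(X) = AᵀXA + CᵀC, ℛ(X) = BᵀXA + DᵀC, 𝒲(X) = I − BᵀXB − DᵀD, 𝒮(X) = ℒ(X) + ℛ(X)ᵀ𝒲(X)⁻¹ℛ(X), and ℱ(X) = A + B𝒲(X)⁻¹ℛ(X). Let X and Y be symmetric n×n matrices with 𝒲(X) and 𝒲(Y) invertible, and let Δ = X − Y. Then the following two identities hold: (i) 𝒮(X) − 𝒮(Y) = ℱ(Y)ᵀ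 Δ ℱ(Y) + ℱ(Y)ᵀ Δ B 𝒲(X)⁻¹ Bᵀ Δ ℱ(Y); (ii) 𝒮(X) − 𝒮(Y) = ℱ(X)ᵀ Δ ℱ(Y). -/
open Matrix

noncomputable section

/-- `ℒ(X) = AᵀXA + CᵀC`. -/
def opL6 {n p : ℕ} (A : Matrix (Fin n) (Fin n) ℝ) (C : Matrix (Fin p) (Fin n) ℝ)
    (X : Matrix (Fin n) (Fin n) ℝ) : Matrix (Fin n) (Fin n) ℝ :=
  Aᵀ * X * A + Cᵀ * C

/-- `ℛ(X) = BᵀXA + DᵀC`. -/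
def opR6 {n m p : ℕ} (A : Matrix (Fin n) (Fin n) ℝ) (B : Matrix (Fin n) (Fin m) ℝ)
    (C : Matrix (Fin p) (Fin n) ℝ) (D : Matrix (Fin p) (Fin m) ℝ)
    (X : Matrix (Fin n) (Fin n) ℝ) : Matrix (Fin m) (Fin n) ℝ :=
  Bᵀ * X * A + Dᵀ * C

/-- `𝒲(X) = I − BᵀXB − DᵀD`. -/
def opW6 {n m p : ℕ} (B : Matrix (Fin n) (Fin m) ℝ) (D : Matrix (Fin p) (Fin m) ℝ)
    (X : Matrix (Fin n) (Fin n) ℝ) : Matrix (Fin m) (Fin m) ℝ :=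
  1 - Bᵀ * X * B - Dᵀ * D

/-- `𝒮(X) = ℒ(X) + ℛ(X)ᵀ𝒲(X)⁻¹ℛ(X)`. -/
def opS6 {n m p : ℕ} (A : Matrix (Fin n) (Fin n) ℝ) (B : Matrix (Fin n) (Fin m) ℝ)
    (C : Matrix (Fin p) (Fin n) ℝ) (D : Matrix (Fin p) (Fin m) ℝ)
    (X : Matrix (Fin n) (Fin n) ℝ) : Matrix (Fin n) (Fin n) ℝ :=
  opL6 A C X + (opR6 A B C D X)ᵀ * (opW6 B D X)⁻¹ * opR6 A B C D X

/-- `ℱ(X) = A + B𝒲(X)⁻¹ℛ(X)`. -/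
def opF6 {n m p : ℕ} (A : Matrix (Fin n) (Fin n) ℝ) (B : Matrix (Fin n) (Fin m) ℝ)
    (C : Matrix (Fin p) (Fin n) ℝ) (D : Matrix (Fin p) (Fin m) ℝ)
    (X : Matrix (Fin n) (Fin n) ℝ) : Matrix (Fin n) (Fin n) ℝ :=
  A + B * (opW6 B D X)⁻¹ * opR6 A B C D X

lemma key6 {n m : ℕ} (A Δ LX LY : Matrix (Fin n) (Fin n) ℝ) (B : Matrix (Fin n) (Fin m) ℝ)
    (RX RY : Matrix (Fin m) (Fin n) ℝ) (WX WY VX VY : Matrix (Fin m) (Fin m) ℝ)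
    (hΔ : Δᵀ = Δ) (hVX : VXᵀ = VX)
    (hXl : VX * WX = 1) (hYr : WY * VY = 1)
    (h1 : RX = RY + Bᵀ * Δ * A) (h2 : WY = WX + Bᵀ * Δ * B) (h3 : LX = LY + Aᵀ * Δ * A) :
    (LX + RXᵀ * VX * RX) - (LY + RYᵀ * VY * RY) =
      (A + B * VX * RX)ᵀ * Δ * (A + B * VY * RY) ∧
    A + B * VX * RX = (A + B * VY * RY) + B * VX * Bᵀ * Δ * (A + B * VY * RY) := by
  have e1 : Bᵀ * Δ * A = RX - RY := by rw [h1]; abel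
  have e2 : Aᵀ * Δ * B = RXᵀ - RYᵀ := by
    have := congrArg Matrix.transpose e1
    simpa [Matrix.transpose_mul, hΔ, Matrix.transpose_sub, Matrix.mul_assoc] using this
  have e3 : Bᵀ * Δ * B = WY - WX := by rw [h2]; abel
  have e4 : Aᵀ * Δ * A = LX - LY := by rw [h3]; abel
  have c1 : ∀ Z : Matrix (Fin m) (Fin n) ℝ, WY * (VY * Z) = Z := by
    intro Z; rw [← Matrix.mul_assoc, hYr, Matrix.one_mul]
  have c2 : ∀ Z : Matrix (Fin m) (Fin n) ℝ, VX * (WX * Z) = Z := by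
    intro Z; rw [← Matrix.mul_assoc, hXl, Matrix.one_mul]
  constructor
  · calc (LX + RXᵀ * VX * RX) - (LY + RYᵀ * VY * RY)
        = (Aᵀ * Δ * A) + (Aᵀ * Δ * B) * (VY * RY) + RXᵀ * VX * (Bᵀ * Δ * A)
            + RXᵀ * (VX * ((Bᵀ * Δ * B) * (VY * RY))) := by
          rw [e1, e2, e3, e4]
          simp only [Matrix.sub_mul, Matrix.mul_sub, Matrix.add_mul, Matrix.mul_add,
            Matrix.mul_assoc, c1, c2]
          abel
      _ = (A + B * VX * RX)ᵀ * Δ * (A + B * VY * RY) := by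
          simp only [Matrix.transpose_add, Matrix.transpose_mul, hVX,
            Matrix.add_mul, Matrix.mul_add, Matrix.mul_assoc]
          abel
  · calc A + B * VX * RX
        = A + B * (VY * RY) + B * (VX * ((Bᵀ * Δ * B) * (VY * RY)))
            + B * (VX * (Bᵀ * Δ * A)) := by
          rw [e1, e3]
          simp only [Matrix.sub_mul, Matrix.mul_sub, Matrix.add_mul, Matrix.mul_add,
            Matrix.mul_assoc, c1, c2]
          abel
      _ = (A + B * VY * RY) + B * VX * Bᵀ * Δ * (A + B * VY * RY) := by
          simp only [Matrix.add_mul, Matrix.mul_add, Matrix.mul_assoc]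
          abel

/-- (Lemma 5, algebraic Riccati identities.) For symmetric `X`, `Y` with
`𝒲(X)` and `𝒲(Y)` invertible and `Δ = X − Y`:
(i) `𝒮(X) − 𝒮(Y) = ℱ(Y)ᵀ Δ ℱ(Y) + ℱ(Y)ᵀ Δ B 𝒲(X)⁻¹ Bᵀ Δ ℱ(Y)`;
(ii) `𝒮(X) − 𝒮(Y) = ℱ(X)ᵀ Δ ℱ(Y)`. -/
theorem statement6 (n m p : ℕ) (A : Matrix (Fin n) (Fin n) ℝ)
    (B : Matrix (Fin n) (Fin m) ℝ) (C : Matrix (Fin p) (Fin n) ℝ)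
    (D : Matrix (Fin p) (Fin m) ℝ) (X Y : Matrix (Fin n) (Fin n) ℝ)
    (hX : Xᵀ = X) (hY : Yᵀ = Y)
    (hWX : IsUnit (opW6 B D X).det) (hWY : IsUnit (opW6 B D Y).det) :
    opS6 A B C D X - opS6 A B C D Y =
        (opF6 A B C D Y)ᵀ * (X - Y) * opF6 A B C D Y +
          (opF6 A B C D Y)ᵀ * (X - Y) * B * (opW6 B D X)⁻¹ * Bᵀ * (X - Y) *
            opF6 A B C D Y ∧
      opS6 A B C D X - opS6 A B C D Y =
        (opF6 A B C D X)ᵀ * (X - Y) * opF6 A B C D Y := by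
  have hΔ : (X - Y)ᵀ = X - Y := by rw [Matrix.transpose_sub, hX, hY]
  have hWXt : (opW6 B D X)ᵀ = opW6 B D X := by
    simp [opW6, Matrix.transpose_sub, Matrix.transpose_mul, hX, Matrix.mul_assoc]
  have hVX : ((opW6 B D X)⁻¹)ᵀ = (opW6 B D X)⁻¹ := by
    rw [Matrix.transpose_nonsing_inv, hWXt]
  have hXl : (opW6 B D X)⁻¹ * opW6 B D X = 1 := Matrix.nonsing_inv_mul _ hWX
  have hYr : opW6 B D Y * (opW6 B D Y)⁻¹ = 1 := Matrix.mul_nonsing_inv _ hWY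
  have h1 : opR6 A B C D X = opR6 A B C D Y + Bᵀ * (X - Y) * A := by
    simp only [opR6, Matrix.mul_sub, Matrix.sub_mul]; abel
  have h2 : opW6 B D Y = opW6 B D X + Bᵀ * (X - Y) * B := by
    simp only [opW6, Matrix.mul_sub, Matrix.sub_mul]; abel
  have h3 : opL6 A C X = opL6 A C Y + Aᵀ * (X - Y) * A := by
    simp only [opL6, Matrix.mul_sub, Matrix.sub_mul]; abel
  obtain ⟨hii, hkey⟩ := key6 A (X - Y) (opL6 A C X) (opL6 A C Y) B
    (opR6 A B C D X) (opR6 A B C D Y) (opW6 B D X) (opW6 B D Y)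
    (opW6 B D X)⁻¹ (opW6 B D Y)⁻¹ hΔ hVX hXl hYr h1 h2 h3
  have hS : opS6 A B C D X - opS6 A B C D Y =
      (opF6 A B C D X)ᵀ * (X - Y) * opF6 A B C D Y := by
    simpa [opS6, opF6] using hii
  refine ⟨?_, hS⟩
  have hF : opF6 A B C D X = opF6 A B C D Y
      + B * (opW6 B D X)⁻¹ * Bᵀ * (X - Y) * opF6 A B C D Y := by
    simpa [opF6] using hkey
  rw [hS, hF]
  simp only [Matrix.transpose_add, Matrix.transpose_mul, Matrix.transpose_transpose,
    Matrix.add_mul, hΔ, hVX, Matrix.mul_assoc]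
end
end

section
/- Assume p_i(k) > 0 for all ψ ∈ Ψ, i ∈ 𝒩, and k ∈ ℕ₀. If the switched Markov jump linear system (𝒢,Π,Ψ,p(0)) is uniformly mean square strictly contractive with constant γ ∈ (0,1), then with ν := 1 − γ² > 0 one has 𝒲(i, X̃_ψ(i,k+1,T)) ≥ ν I (in particular 𝒲(i, X̃_ψ(i,k+1,T)) is positive definite, hence invertible, so the Riccati recursion is well defined) for all ψ ∈ Ψ, all i ∈ 𝒩, all horizons T ∈ ℕ₀, and all 0 ≤ k ≤ T. -/
open Matrix
open scoped Classical

noncomputable section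

namespace SMJLS

/-!
Backward induction on `k`. Once `𝒲` is invertible at all later times, the Riccati step is a
completion of squares: along the feedback `w(l) = 𝒲⁻¹ℛ x(l)`, the cost-to-go
`V(l) = E[x(l)ᵀ X_ψ(θ(l), l, T) x(l)]` satisfies `V(l) = E‖z(l)‖² − E‖w(l)‖² + V(l+1)`,
with `V(T+1) = 0`. Apply contractiveness to the disturbance that equals `v` at time `k` on
`{θ(k) = i}` and follows this feedback up to `T`: since `V(k+1) = p_i(k) (B(i)v)ᵀ X̃ (B(i)v)`,
`p_i(k) (‖D(i)v‖² + (B(i)v)ᵀ X̃ (B(i)v)) ≤ γ² p_i(k) ‖v‖² − (1 − γ²) Σ_{l>k} E‖w(l)‖²`,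
and dividing by `p_i(k) > 0` gives `vᵀ 𝒲 v ≥ (1 − γ²) ‖v‖²`.
-/

section QuadraticForm
variable {R ι κ : Type*} [CommSemiring R] [Fintype ι] [Fintype κ]

lemma dotProduct_transpose_mul_mul_mulVec (M : Matrix κ ι R) (X : Matrix κ κ R) (x : ι → R) :
    x ⬝ᵥ (Mᵀ * X * M) *ᵥ x = (M *ᵥ x) ⬝ᵥ X *ᵥ (M *ᵥ x) := by
  rw [Matrix.mul_assoc, ← mulVec_mulVec, ← mulVec_mulVec, dotProduct_mulVec, vecMul_transpose]

lemma dotProduct_transpose_mul_self_mulVec (M : Matrix κ ι R) (x : ι → R) :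
    x ⬝ᵥ (Mᵀ * M) *ᵥ x = (M *ᵥ x) ⬝ᵥ (M *ᵥ x) := by
  rw [← mulVec_mulVec, dotProduct_mulVec, vecMul_transpose]

lemma dotProduct_sum_smul_mulVec {σ : Type*} [Fintype σ] (c : σ → R) (M : σ → Matrix ι ι R)
    (x : ι → R) : x ⬝ᵥ (∑ j, c j • M j) *ᵥ x = ∑ j, c j * (x ⬝ᵥ M j *ᵥ x) := by
  simp only [sum_mulVec, dotProduct_sum, smul_mulVec, dotProduct_smul, smul_eq_mul]

end QuadraticForm

lemma isSymm_sum {R ι σ : Type*} [AddCommMonoid R] (s : Finset σ) {A : σ → Matrix ι ι R}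
    (h : ∀ j ∈ s, (A j).IsSymm) : (∑ j ∈ s, A j).IsSymm := by
  simp only [IsSymm, transpose_sum]
  exact Finset.sum_congr rfl h

section Riccati
variable {n m p N J : ℕ} {Am : Fin N → Matrix (Fin n) (Fin n) ℝ}
  {Bm : Fin N → Matrix (Fin n) (Fin m) ℝ} {Cm : Fin N → Matrix (Fin p) (Fin n) ℝ}
  {Dm : Fin N → Matrix (Fin p) (Fin m) ℝ} {Pm : Fin J → Matrix (Fin N) (Fin N) ℝ}
  {ψ : ℕ → Fin J} {X : Matrix (Fin n) (Fin n) ℝ}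

lemma isSymm_opW (i : Fin N) (hX : X.IsSymm) : (opW Bm Dm i X).IsSymm := by
  simp only [IsSymm, SMJLS.opW, transpose_sub, transpose_mul, transpose_one, transpose_transpose,
    hX.eq, Matrix.mul_assoc]

lemma isSymm_opS (i : Fin N) (hX : X.IsSymm) : (opS Am Bm Cm Dm i X).IsSymm := by
  simp only [IsSymm, SMJLS.opS, opL, transpose_add, transpose_mul, transpose_transpose, hX.eq,
    transpose_nonsing_inv, (isSymm_opW i hX).eq, Matrix.mul_assoc]

lemma isSymm_ricAuxE (T : ℕ) (ε : ℝ) (d : ℕ) (i : Fin N) :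
    (ricAuxE Am Bm Cm Dm Pm ψ T ε d i).IsSymm := by
  induction d generalizing i with
  | zero => exact isSymm_zero
  | succ d ih =>
    exact (isSymm_opS i (isSymm_sum _ fun j _ => (ih j).smul _)).add (isSymm_one.smul ε)

lemma isSymm_ric (i : Fin N) (k T : ℕ) : (ric Am Bm Cm Dm Pm ψ i k T).IsSymm :=
  isSymm_ricAuxE T 0 _ i

variable (Am Bm Cm Dm Pm ψ) in
/-- `X̃_ψ(i, l+1, T)`. -/
def ricTilde (T : ℕ) (i : Fin N) (l : ℕ) : Matrix (Fin n) (Fin n) ℝ :=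
  ∑ j, Pm (ψ (l + 1)) i j • ric Am Bm Cm Dm Pm ψ j (l + 1) T

lemma isSymm_ricTilde (T : ℕ) (i : Fin N) (l : ℕ) :
    (ricTilde Am Bm Cm Dm Pm ψ T i l).IsSymm :=
  isSymm_sum _ fun j _ => (isSymm_ric j _ T).smul _

lemma ric_succ_self (i : Fin N) (T : ℕ) : ric Am Bm Cm Dm Pm ψ i (T + 1) T = 0 := by
  simp [ric, ricE, ricAuxE]

lemma ric_of_le (i : Fin N) {k T : ℕ} (hk : k ≤ T) :
    ric Am Bm Cm Dm Pm ψ i k T = opS Am Bm Cm Dm i (ricTilde Am Bm Cm Dm Pm ψ T i k) := by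
  obtain ⟨d, rfl⟩ := Nat.exists_eq_add_of_le hk
  simp only [ric, ricE, ricTilde, show k + d + 1 - k = d + 1 by omega,
    show k + d + 1 - (k + 1) = d by omega, ricAuxE, show k + d - d = k by omega, zero_smul,
    add_zero]

variable (Am Bm Cm Dm) in
def opK (i : Fin N) (X : Matrix (Fin n) (Fin n) ℝ) : Matrix (Fin m) (Fin n) ℝ :=
  (opW Bm Dm i X)⁻¹ * opR Am Bm Cm Dm i X

lemma opF_eq_add_mul_opK (i : Fin N) :
    opF Am Bm Cm Dm i X = Am i + Bm i * opK Am Bm Cm Dm i X := by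
  rw [opF, opK, Matrix.mul_assoc]

lemma opS_eq_completed_square (i : Fin N) (hX : X.IsSymm) (hW : IsUnit (opW Bm Dm i X).det) :
    opS Am Bm Cm Dm i X =
      (opF Am Bm Cm Dm i X)ᵀ * X * opF Am Bm Cm Dm i X +
        (Cm i + Dm i * opK Am Bm Cm Dm i X)ᵀ * (Cm i + Dm i * opK Am Bm Cm Dm i X) -
        (opK Am Bm Cm Dm i X)ᵀ * opK Am Bm Cm Dm i X := by
  have hWK : opW Bm Dm i X * opK Am Bm Cm Dm i X = opR Am Bm Cm Dm i X :=
    mul_nonsing_inv_cancel_left _ _ hW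
  have expand : ∀ K : Matrix (Fin m) (Fin n) ℝ,
      (Am i + Bm i * K)ᵀ * X * (Am i + Bm i * K) + (Cm i + Dm i * K)ᵀ * (Cm i + Dm i * K) -
          Kᵀ * K =
        opL Am Cm i X + (opR Am Bm Cm Dm i X)ᵀ * K +
          Kᵀ * (opR Am Bm Cm Dm i X - opW Bm Dm i X * K) := by
    intro K
    simp only [opL, opR, opW, transpose_add, transpose_mul, transpose_transpose, hX.eq,
      Matrix.add_mul, Matrix.mul_add, Matrix.sub_mul, Matrix.mul_sub, Matrix.one_mul,
      Matrix.mul_assoc]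
    abel
  rw [opF_eq_add_mul_opK, expand, hWK, sub_self, Matrix.mul_zero, add_zero, opS, opK,
    Matrix.mul_assoc]

end Riccati

section Expectation
variable {N J : ℕ} {Pm : Fin J → Matrix (Fin N) (Fin N) ℝ} {ψ : ℕ → Fin J} {p0 : Fin N → ℝ}

def clampPath (k : ℕ) (path : Fin (k + 1) → Fin N) : ℕ → Fin N :=
  fun l => path ⟨min l k, Nat.lt_succ_of_le (min_le_right l k)⟩

lemma pexp_eq_sum (k : ℕ) (g : (ℕ → Fin N) → ℝ) :
    pexp Pm ψ p0 k g = ∑ path, weight Pm ψ p0 k path * g (clampPath k path) := rfl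

lemma clampPath_of_le {k : ℕ} (path : Fin (k + 1) → Fin N) {t : ℕ} (ht : t ≤ k) :
    clampPath k path t = path ⟨t, Nat.lt_succ_of_le ht⟩ := by
  simp [clampPath, min_eq_left ht]

lemma clampPath_self (k : ℕ) (path : Fin (k + 1) → Fin N) :
    clampPath k path k = path (Fin.last k) :=
  clampPath_of_le path le_rfl

lemma clampPath_snoc_of_le {k : ℕ} (q : Fin (k + 1) → Fin N) (j : Fin N) {t : ℕ} (ht : t ≤ k) :
    clampPath (k + 1) (Fin.snoc q j) t = clampPath k q t := by
  rw [clampPath_of_le _ (ht.trans k.le_succ), clampPath_of_le _ ht]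
  exact Fin.snoc_castSucc (α := fun _ => Fin N) (i := ⟨t, Nat.lt_succ_of_le ht⟩) ..

lemma clampPath_snoc_self {k : ℕ} (q : Fin (k + 1) → Fin N) (j : Fin N) :
    clampPath (k + 1) (Fin.snoc q j) (k + 1) = j := by
  rw [clampPath_self]
  exact Fin.snoc_last (α := fun _ => Fin N) ..

lemma weight_snoc (k : ℕ) (q : Fin (k + 1) → Fin N) (j : Fin N) :
    weight Pm ψ p0 (k + 1) (Fin.snoc q j) =
      weight Pm ψ p0 k q * Pm (ψ (k + 1)) (q (Fin.last k)) j := by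
  simp only [weight, Fin.prod_univ_castSucc, Fin.snoc_castSucc, Fin.succ_castSucc,
    Fin.succ_last, Fin.snoc_last, Fin.val_castSucc, Fin.val_last]
  rw [show (0 : Fin (k + 2)) = Fin.castSucc 0 from rfl, Fin.snoc_castSucc, mul_assoc]

lemma pexp_succ (k : ℕ) (g : (ℕ → Fin N) → Fin N → ℝ)
    (hg : ∀ ω ω', (∀ t ≤ k, ω t = ω' t) → g ω = g ω') :
    pexp Pm ψ p0 (k + 1) (fun ω => g ω (ω (k + 1))) =
      pexp Pm ψ p0 k (fun ω => ∑ j, Pm (ψ (k + 1)) (ω k) j * g ω j) := by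
  have sum_snoc : ∀ f : (Fin (k + 2) → Fin N) → ℝ,
      ∑ path, f path = ∑ q : Fin (k + 1) → Fin N, ∑ j, f (Fin.snoc q j) := fun f => by
    rw [← (Fin.snocEquiv fun _ => Fin N).sum_comp, Fintype.sum_prod_type, Finset.sum_comm]
    rfl
  rw [pexp_eq_sum, pexp_eq_sum, sum_snoc]
  refine Finset.sum_congr rfl fun q _ => ?_
  rw [Finset.mul_sum]
  refine Finset.sum_congr rfl fun j _ => ?_
  rw [weight_snoc, clampPath_snoc_self, clampPath_self,
    hg _ (clampPath k q) fun t ht => clampPath_snoc_of_le q j ht]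
  ring

lemma pexp_comp_last (k : ℕ) (h : Fin N → ℝ) :
    pexp Pm ψ p0 k (fun ω => h (ω k)) = ∑ i, pdist Pm ψ p0 k i * h i := by
  induction k generalizing h with
  | zero =>
    rw [pexp_eq_sum, ← (Equiv.funUnique (Fin 1) (Fin N)).symm.sum_comp]
    simp [weight, clampPath, pdist]
  | succ k ih =>
    rw [pexp_succ k (fun _ j => h j) fun _ _ _ => rfl, ih fun a => ∑ j, Pm (ψ (k + 1)) a j * h j,
      pdist]
    simp only [vecMul, dotProduct, Finset.sum_mul, Finset.mul_sum, mul_assoc]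
    exact Finset.sum_comm

lemma pexp_eq_of_eq_ite {k : ℕ} {g : (ℕ → Fin N) → ℝ} (i : Fin N) (c : ℝ)
    (hg : ∀ ω, g ω = if ω k = i then c else 0) : pexp Pm ψ p0 k g = pdist Pm ψ p0 k i * c := by
  rw [show g = fun ω => (fun a => if a = i then c else 0) (ω k) from funext hg,
    pexp_comp_last k fun a => if a = i then c else 0]
  simp

lemma pexp_eq_zero {k : ℕ} {g : (ℕ → Fin N) → ℝ} (hg : ∀ ω, g ω = 0) : pexp Pm ψ p0 k g = 0 :=
  Finset.sum_eq_zero fun _ _ => by rw [hg, mul_zero]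

lemma pexp_add (k : ℕ) (f g : (ℕ → Fin N) → ℝ) :
    pexp Pm ψ p0 k (fun ω => f ω + g ω) = pexp Pm ψ p0 k f + pexp Pm ψ p0 k g := by
  simp only [pexp_eq_sum, mul_add, Finset.sum_add_distrib]

lemma pexp_sub (k : ℕ) (f g : (ℕ → Fin N) → ℝ) :
    pexp Pm ψ p0 k (fun ω => f ω - g ω) = pexp Pm ψ p0 k f - pexp Pm ψ p0 k g := by
  simp only [pexp_eq_sum, mul_sub, Finset.sum_sub_distrib]

lemma pexp_nonneg (hp0 : ∀ i, 0 ≤ p0 i) (hP : ∀ s i j, 0 ≤ Pm s i j) (k : ℕ)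
    {g : (ℕ → Fin N) → ℝ} (hg : ∀ ω, 0 ≤ g ω) : 0 ≤ pexp Pm ψ p0 k g :=
  Finset.sum_nonneg fun _ _ =>
    mul_nonneg (mul_nonneg (hp0 _) (Finset.prod_nonneg fun _ _ => hP _ _ _)) (hg _)

lemma energy_nonneg (hp0 : ∀ i, 0 ≤ p0 i) (hP : ∀ s i j, 0 ≤ Pm s i j)
    {d : ℕ} (v : ℕ → (ℕ → Fin N) → Fin d → ℝ) (l : ℕ) : 0 ≤ energy Pm ψ p0 v l :=
  pexp_nonneg hp0 hP l fun _ => Finset.sum_nonneg fun _ _ => mul_self_nonneg _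

end Expectation

section Feedback
variable {n m p N : ℕ} (Am : Fin N → Matrix (Fin n) (Fin n) ℝ)
  (Bm : Fin N → Matrix (Fin n) (Fin m) ℝ) (u : ℕ → (ℕ → Fin N) → (Fin n → ℝ) → Fin m → ℝ)

def feedbackState : ℕ → (ℕ → Fin N) → Fin n → ℝ
  | 0, _ => 0
  | l + 1, ω => Am (ω l) *ᵥ feedbackState l ω + Bm (ω l) *ᵥ u l ω (feedbackState l ω)

def feedbackInput (l : ℕ) (ω : ℕ → Fin N) : Fin m → ℝ :=
  u l ω (feedbackState Am Bm u l ω)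

lemma traj_feedbackInput :
    traj Am Bm (fun _ => 0) (feedbackInput Am Bm u) = feedbackState Am Bm u := by
  funext l ω
  induction l with
  | zero => rfl
  | succ l ih => simp only [traj, feedbackState, feedbackInput, ih]

lemma errv_feedbackInput (Cm : Fin N → Matrix (Fin p) (Fin n) ℝ)
    (Dm : Fin N → Matrix (Fin p) (Fin m) ℝ) (l : ℕ) (ω : ℕ → Fin N) :
    errv Am Bm Cm Dm (fun _ => 0) (feedbackInput Am Bm u) l ω =
      Cm (ω l) *ᵥ feedbackState Am Bm u l ω + Dm (ω l) *ᵥ feedbackInput Am Bm u l ω := by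
  rw [errv, traj_feedbackInput]

variable {Am Bm u}

lemma feedbackState_congr (hu : ∀ l ω ω', (∀ t ≤ l, ω t = ω' t) → u l ω = u l ω') {l : ℕ}
    {ω ω' : ℕ → Fin N} (h : ∀ t < l, ω t = ω' t) :
    feedbackState Am Bm u l ω = feedbackState Am Bm u l ω' := by
  induction l with
  | zero => rfl
  | succ l ih =>
    have hx := ih fun t ht => h t (ht.trans l.lt_succ_self)
    simp only [feedbackState, h l l.lt_succ_self, hx,
      hu l ω ω' fun t ht => h t (Nat.lt_succ_of_le ht)]

lemma adapted_feedbackInput (hu : ∀ l ω ω', (∀ t ≤ l, ω t = ω' t) → u l ω = u l ω') :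
    Adapted (feedbackInput Am Bm u) := fun l ω ω' h => by
  rw [feedbackInput, feedbackInput, hu l ω ω' h,
    feedbackState_congr hu fun t ht => h t ht.le]

end Feedback

section WorstCase
variable {n m p N J : ℕ} (Am : Fin N → Matrix (Fin n) (Fin n) ℝ)
  (Bm : Fin N → Matrix (Fin n) (Fin m) ℝ) (Cm : Fin N → Matrix (Fin p) (Fin n) ℝ)
  (Dm : Fin N → Matrix (Fin p) (Fin m) ℝ) (Pm : Fin J → Matrix (Fin N) (Fin N) ℝ)
  (ψ : ℕ → Fin J) (p0 : Fin N → ℝ) (T k : ℕ) (i : Fin N) (v : Fin m → ℝ)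

def worstLaw : ℕ → (ℕ → Fin N) → (Fin n → ℝ) → Fin m → ℝ := fun l ω x =>
  if l = k then (if ω k = i then v else 0)
  else if l ≤ T then opK Am Bm Cm Dm (ω l) (ricTilde Am Bm Cm Dm Pm ψ T (ω l) l) *ᵥ x
  else 0

def worstState : ℕ → (ℕ → Fin N) → Fin n → ℝ :=
  feedbackState Am Bm (worstLaw Am Bm Cm Dm Pm ψ T k i v)

def worstInput : ℕ → (ℕ → Fin N) → Fin m → ℝ :=
  feedbackInput Am Bm (worstLaw Am Bm Cm Dm Pm ψ T k i v)

def worstValue (l : ℕ) : ℝ :=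
  pexp Pm ψ p0 l fun ω => worstState Am Bm Cm Dm Pm ψ T k i v l ω ⬝ᵥ
    ric Am Bm Cm Dm Pm ψ (ω l) l T *ᵥ worstState Am Bm Cm Dm Pm ψ T k i v l ω

variable {Am Bm Cm Dm Pm ψ p0 T k i v}

lemma worstLaw_causal (l : ℕ) (ω ω' : ℕ → Fin N) (h : ∀ t ≤ l, ω t = ω' t) :
    worstLaw Am Bm Cm Dm Pm ψ T k i v l ω = worstLaw Am Bm Cm Dm Pm ψ T k i v l ω' := by
  unfold worstLaw
  split_ifs with hlk <;> simp_all

lemma worstState_succ_eq (l : ℕ) (ω : ℕ → Fin N) :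
    worstState Am Bm Cm Dm Pm ψ T k i v (l + 1) ω =
      Am (ω l) *ᵥ worstState Am Bm Cm Dm Pm ψ T k i v l ω +
        Bm (ω l) *ᵥ worstInput Am Bm Cm Dm Pm ψ T k i v l ω :=
  rfl

lemma worstInput_eq (l : ℕ) (ω : ℕ → Fin N) :
    worstInput Am Bm Cm Dm Pm ψ T k i v l ω =
      worstLaw Am Bm Cm Dm Pm ψ T k i v l ω (worstState Am Bm Cm Dm Pm ψ T k i v l ω) :=
  rfl

lemma errv_worstInput (l : ℕ) (ω : ℕ → Fin N) :
    errv Am Bm Cm Dm (fun _ => 0) (worstInput Am Bm Cm Dm Pm ψ T k i v) l ω =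
      Cm (ω l) *ᵥ worstState Am Bm Cm Dm Pm ψ T k i v l ω +
        Dm (ω l) *ᵥ worstInput Am Bm Cm Dm Pm ψ T k i v l ω :=
  errv_feedbackInput Am Bm _ Cm Dm l ω

lemma adapted_worstInput : Adapted (worstInput Am Bm Cm Dm Pm ψ T k i v) :=
  adapted_feedbackInput worstLaw_causal

lemma worstState_congr {l : ℕ} {ω ω' : ℕ → Fin N} (h : ∀ t < l, ω t = ω' t) :
    worstState Am Bm Cm Dm Pm ψ T k i v l ω = worstState Am Bm Cm Dm Pm ψ T k i v l ω' :=
  feedbackState_congr worstLaw_causal h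

lemma worstState_of_le {l : ℕ} (hl : l ≤ k) (ω : ℕ → Fin N) :
    worstState Am Bm Cm Dm Pm ψ T k i v l ω = 0 := by
  induction l with
  | zero => rfl
  | succ l ih =>
    simp [worstState_succ_eq, worstInput_eq, worstLaw, ih (by omega), show l ≠ k by omega]

lemma worstInput_of_lt {l : ℕ} (hl : l < k) (ω : ℕ → Fin N) :
    worstInput Am Bm Cm Dm Pm ψ T k i v l ω = 0 := by
  simp [worstInput_eq, worstLaw, worstState_of_le hl.le, hl.ne]

lemma worstInput_self (ω : ℕ → Fin N) :
    worstInput Am Bm Cm Dm Pm ψ T k i v k ω = if ω k = i then v else 0 := by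
  simp [worstInput_eq, worstLaw]

lemma worstInput_of_lt_of_le {l : ℕ} (hkl : k < l) (hlT : l ≤ T) (ω : ℕ → Fin N) :
    worstInput Am Bm Cm Dm Pm ψ T k i v l ω =
      opK Am Bm Cm Dm (ω l) (ricTilde Am Bm Cm Dm Pm ψ T (ω l) l) *ᵥ
        worstState Am Bm Cm Dm Pm ψ T k i v l ω := by
  simp [worstInput_eq, worstLaw, hkl.ne', hlT]

lemma worstInput_of_gt (hk : k ≤ T) {l : ℕ} (hl : T < l) (ω : ℕ → Fin N) :
    worstInput Am Bm Cm Dm Pm ψ T k i v l ω = 0 := by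
  simp [worstInput_eq, worstLaw, show l ≠ k by omega, show ¬ l ≤ T by omega]

lemma worstState_succ_self (ω : ℕ → Fin N) :
    worstState Am Bm Cm Dm Pm ψ T k i v (k + 1) ω = if ω k = i then Bm i *ᵥ v else 0 := by
  rw [worstState_succ_eq, worstState_of_le le_rfl, worstInput_self]
  split_ifs with h <;> simp [h]

lemma worstState_succ {l : ℕ} (hkl : k < l) (hlT : l ≤ T) (ω : ℕ → Fin N) :
    worstState Am Bm Cm Dm Pm ψ T k i v (l + 1) ω =
      opF Am Bm Cm Dm (ω l) (ricTilde Am Bm Cm Dm Pm ψ T (ω l) l) *ᵥ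
        worstState Am Bm Cm Dm Pm ψ T k i v l ω := by
  rw [worstState_succ_eq, worstInput_of_lt_of_le hkl hlT, opF_eq_add_mul_opK,
    add_mulVec, mulVec_mulVec]

end WorstCase

section WorstCaseCost
variable {n m p N J : ℕ} {Am : Fin N → Matrix (Fin n) (Fin n) ℝ}
  {Bm : Fin N → Matrix (Fin n) (Fin m) ℝ} {Cm : Fin N → Matrix (Fin p) (Fin n) ℝ}
  {Dm : Fin N → Matrix (Fin p) (Fin m) ℝ} {Pm : Fin J → Matrix (Fin N) (Fin N) ℝ}
  {ψ : ℕ → Fin J} {p0 : Fin N → ℝ} {T k : ℕ} {i : Fin N} {v : Fin m → ℝ}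

lemma energy_worstInput_of_notMem (hk : k ≤ T) {l : ℕ} (hl : l ∉ Finset.Ico k (T + 1)) :
    energy Pm ψ p0 (worstInput Am Bm Cm Dm Pm ψ T k i v) l = 0 :=
  pexp_eq_zero fun ω => by
    rcases (show l < k ∨ T < l by simp only [Finset.mem_Ico, not_and_or] at hl; omega)
      with h | h
    · rw [worstInput_of_lt h, dotProduct_zero]
    · rw [worstInput_of_gt hk h, dotProduct_zero]

lemma energy_worstInput_self :
    energy Pm ψ p0 (worstInput Am Bm Cm Dm Pm ψ T k i v) k = pdist Pm ψ p0 k i * (v ⬝ᵥ v) :=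
  pexp_eq_of_eq_ite i _ fun ω => by
    rw [worstInput_self]
    split_ifs <;> simp

lemma energy_errv_worstInput_self :
    energy Pm ψ p0 (errv Am Bm Cm Dm (fun _ => 0) (worstInput Am Bm Cm Dm Pm ψ T k i v)) k =
      pdist Pm ψ p0 k i * ((Dm i *ᵥ v) ⬝ᵥ (Dm i *ᵥ v)) :=
  pexp_eq_of_eq_ite i _ fun ω => by
    rw [errv_worstInput, worstState_of_le le_rfl, worstInput_self]
    split_ifs with h <;> simp [h]

lemma worstValue_succ_horizon : worstValue Am Bm Cm Dm Pm ψ p0 T k i v (T + 1) = 0 :=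
  pexp_eq_zero fun ω => by rw [ric_succ_self, zero_mulVec, dotProduct_zero]

lemma worstValue_succ (l : ℕ) :
    worstValue Am Bm Cm Dm Pm ψ p0 T k i v (l + 1) =
      pexp Pm ψ p0 l fun ω => worstState Am Bm Cm Dm Pm ψ T k i v (l + 1) ω ⬝ᵥ
        ricTilde Am Bm Cm Dm Pm ψ T (ω l) l *ᵥ worstState Am Bm Cm Dm Pm ψ T k i v (l + 1) ω := by
  rw [worstValue, pexp_succ l (fun ω j => worstState Am Bm Cm Dm Pm ψ T k i v (l + 1) ω ⬝ᵥ
      ric Am Bm Cm Dm Pm ψ j (l + 1) T *ᵥ worstState Am Bm Cm Dm Pm ψ T k i v (l + 1) ω)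
    fun ω ω' h => by
      rw [worstState_congr fun t ht => h t (Nat.lt_succ_iff.mp ht)]]
  simp only [ricTilde, dotProduct_sum_smul_mulVec]

lemma worstValue_succ_self :
    worstValue Am Bm Cm Dm Pm ψ p0 T k i v (k + 1) =
      pdist Pm ψ p0 k i * ((Bm i *ᵥ v) ⬝ᵥ ricTilde Am Bm Cm Dm Pm ψ T i k *ᵥ (Bm i *ᵥ v)) := by
  rw [worstValue_succ]
  exact pexp_eq_of_eq_ite i _ fun ω => by
    rw [worstState_succ_self]
    split_ifs with h <;> simp [h]

/-- Completing the square along the worst-case trajectory. -/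
lemma worstValue_eq_add {l : ℕ} (hkl : k < l) (hlT : l ≤ T)
    (hW : ∀ a, IsUnit (opW Bm Dm a (ricTilde Am Bm Cm Dm Pm ψ T a l)).det) :
    worstValue Am Bm Cm Dm Pm ψ p0 T k i v l =
      energy Pm ψ p0 (errv Am Bm Cm Dm (fun _ => 0) (worstInput Am Bm Cm Dm Pm ψ T k i v)) l -
        energy Pm ψ p0 (worstInput Am Bm Cm Dm Pm ψ T k i v) l +
        worstValue Am Bm Cm Dm Pm ψ p0 T k i v (l + 1) := by
  rw [worstValue_succ, energy, energy, ← pexp_sub, ← pexp_add, worstValue]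
  congr 1
  funext ω
  rw [ric_of_le (ω l) hlT, opS_eq_completed_square (ω l) (isSymm_ricTilde T (ω l) l) (hW (ω l)),
    sub_mulVec, add_mulVec, dotProduct_sub, dotProduct_add,
    dotProduct_transpose_mul_mul_mulVec, dotProduct_transpose_mul_self_mulVec,
    dotProduct_transpose_mul_self_mulVec, errv_worstInput, worstInput_of_lt_of_le hkl hlT,
    worstState_succ hkl hlT]
  simp only [add_mulVec, mulVec_mulVec]
  ring

lemma worstValue_succ_eq_sum (hk : k ≤ T)
    (hW : ∀ l, k < l → l ≤ T → ∀ a, IsUnit (opW Bm Dm a (ricTilde Am Bm Cm Dm Pm ψ T a l)).det) :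
    worstValue Am Bm Cm Dm Pm ψ p0 T k i v (k + 1) =
      ∑ l ∈ Finset.Ico (k + 1) (T + 1),
        (energy Pm ψ p0 (errv Am Bm Cm Dm (fun _ => 0) (worstInput Am Bm Cm Dm Pm ψ T k i v)) l -
          energy Pm ψ p0 (worstInput Am Bm Cm Dm Pm ψ T k i v) l) := by
  have hstep : ∀ l ∈ Finset.Ico (k + 1) (T + 1),
      energy Pm ψ p0 (errv Am Bm Cm Dm (fun _ => 0) (worstInput Am Bm Cm Dm Pm ψ T k i v)) l -
          energy Pm ψ p0 (worstInput Am Bm Cm Dm Pm ψ T k i v) l =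
        worstValue Am Bm Cm Dm Pm ψ p0 T k i v l -
          worstValue Am Bm Cm Dm Pm ψ p0 T k i v (l + 1) := fun l hl => by
    rw [Finset.mem_Ico] at hl
    rw [worstValue_eq_add (by omega) (by omega) (hW l (by omega) (by omega))]
    ring
  have htel := Finset.sum_Ico_sub (worstValue Am Bm Cm Dm Pm ψ p0 T k i v)
    (show k + 1 ≤ T + 1 by omega)
  rw [Finset.sum_congr rfl hstep, Finset.sum_sub_distrib]
  rw [Finset.sum_sub_distrib, worstValue_succ_horizon] at htel
  linarith

end WorstCaseCost

section Contraction
variable {n m p N J : ℕ} {Am : Fin N → Matrix (Fin n) (Fin n) ℝ}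
  {Bm : Fin N → Matrix (Fin n) (Fin m) ℝ} {Cm : Fin N → Matrix (Fin p) (Fin n) ℝ}
  {Dm : Fin N → Matrix (Fin p) (Fin m) ℝ} {Pm : Fin J → Matrix (Fin N) (Fin N) ℝ}
  {ψ : ℕ → Fin J} {p0 : Fin N → ℝ} {γ : ℝ} {T k : ℕ}

lemma sum_energy_errv_worstInput_le (hP : ∀ s i j, 0 ≤ Pm s i j) (hp0 : ∀ i, 0 ≤ p0 i)
    (hcontr : ContractiveWith Am Bm Cm Dm Pm γ ψ p0) (hk : k ≤ T) (i : Fin N) (v : Fin m → ℝ) :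
    ∑ l ∈ Finset.Ico k (T + 1),
        energy Pm ψ p0 (errv Am Bm Cm Dm (fun _ => 0) (worstInput Am Bm Cm Dm Pm ψ T k i v)) l ≤
      γ ^ 2 *
        ∑ l ∈ Finset.Ico k (T + 1), energy Pm ψ p0 (worstInput Am Bm Cm Dm Pm ψ T k i v) l := by
  have hw : ∀ l ∉ Finset.Ico k (T + 1),
      energy Pm ψ p0 (worstInput Am Bm Cm Dm Pm ψ T k i v) l = 0 :=
    fun l hl => energy_worstInput_of_notMem hk hl
  obtain ⟨hz, hle⟩ := hcontr _ adapted_worstInput (summable_of_ne_finset_zero hw)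
  calc _ ≤ _ := hz.sum_le_tsum _ fun l _ => energy_nonneg hp0 hP _ l
    _ ≤ _ := hle
    _ = _ := by rw [tsum_eq_sum hw]

lemma quadratic_le_of_contractiveWith (hP : ∀ s i j, 0 ≤ Pm s i j) (hp0 : ∀ i, 0 ≤ p0 i)
    (hγ : γ ^ 2 ≤ 1) (hcontr : ContractiveWith Am Bm Cm Dm Pm γ ψ p0) (hk : k ≤ T) {i : Fin N}
    (hpos : 0 < pdist Pm ψ p0 k i)
    (hW : ∀ l, k < l → l ≤ T → ∀ a, IsUnit (opW Bm Dm a (ricTilde Am Bm Cm Dm Pm ψ T a l)).det)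
    (v : Fin m → ℝ) :
    (Dm i *ᵥ v) ⬝ᵥ (Dm i *ᵥ v) + (Bm i *ᵥ v) ⬝ᵥ ricTilde Am Bm Cm Dm Pm ψ T i k *ᵥ (Bm i *ᵥ v) ≤
      γ ^ 2 * (v ⬝ᵥ v) := by
  have hsum := sum_energy_errv_worstInput_le hP hp0 hcontr hk i v
  simp only [Finset.sum_eq_sum_Ico_succ_bot (show k < T + 1 by omega), energy_worstInput_self,
    energy_errv_worstInput_self] at hsum
  have hV := worstValue_succ_eq_sum (p0 := p0) (i := i) (v := v) hk hW
  rw [worstValue_succ_self, Finset.sum_sub_distrib] at hV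
  have hwpos : 0 ≤ ∑ l ∈ Finset.Ico (k + 1) (T + 1),
      energy Pm ψ p0 (worstInput Am Bm Cm Dm Pm ψ T k i v) l :=
    Finset.sum_nonneg fun l _ => energy_nonneg hp0 hP _ l
  refine le_of_mul_le_mul_left ?_ hpos
  nlinarith [mul_nonneg (sub_nonneg.2 hγ) hwpos]

lemma opW_sub_posSemidef (hP : ∀ s i j, 0 ≤ Pm s i j) (hp0 : ∀ i, 0 ≤ p0 i)
    (hγ : γ ^ 2 ≤ 1) (hcontr : ContractiveWith Am Bm Cm Dm Pm γ ψ p0) (hk : k ≤ T) {i : Fin N}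
    (hpos : 0 < pdist Pm ψ p0 k i)
    (hW : ∀ l, k < l → l ≤ T → ∀ a, IsUnit (opW Bm Dm a (ricTilde Am Bm Cm Dm Pm ψ T a l)).det) :
    (opW Bm Dm i (ricTilde Am Bm Cm Dm Pm ψ T i k) - (1 - γ ^ 2) • 1).PosSemidef := by
  refine PosSemidef.of_dotProduct_mulVec_nonneg (isHermitian_iff_isSymm.2
    ((isSymm_opW i (isSymm_ricTilde T i k)).sub (isSymm_one.smul _))) fun x => ?_
  have hx := quadratic_le_of_contractiveWith hP hp0 hγ hcontr hk hpos hW x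
  rw [star_trivial, opW, sub_mulVec, sub_mulVec, sub_mulVec, dotProduct_sub, dotProduct_sub,
    dotProduct_sub, one_mulVec, smul_mulVec, one_mulVec, dotProduct_smul, smul_eq_mul,
    dotProduct_transpose_mul_mul_mulVec, dotProduct_transpose_mul_self_mulVec]
  linarith

lemma opW_posDef (hP : ∀ s i j, 0 ≤ Pm s i j) (hp0 : ∀ i, 0 ≤ p0 i)
    (hγ : γ ^ 2 < 1) (hcontr : ContractiveWith Am Bm Cm Dm Pm γ ψ p0) (hk : k ≤ T) {i : Fin N}
    (hpos : 0 < pdist Pm ψ p0 k i)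
    (hW : ∀ l, k < l → l ≤ T → ∀ a, IsUnit (opW Bm Dm a (ricTilde Am Bm Cm Dm Pm ψ T a l)).det) :
    (opW Bm Dm i (ricTilde Am Bm Cm Dm Pm ψ T i k)).PosDef := by
  simpa using PosDef.posSemidef_add (opW_sub_posSemidef hP hp0 hγ.le hcontr hk hpos hW)
    (PosDef.one.smul (sub_pos.2 hγ))

lemma isUnit_det_opW (hP : ∀ s i j, 0 ≤ Pm s i j) (hp0 : ∀ i, 0 ≤ p0 i)
    (hγ : γ ^ 2 < 1) (hcontr : ContractiveWith Am Bm Cm Dm Pm γ ψ p0)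
    (hpos : ∀ k i, 0 < pdist Pm ψ p0 k i) (hk : k ≤ T) (i : Fin N) :
    IsUnit (opW Bm Dm i (ricTilde Am Bm Cm Dm Pm ψ T i k)).det := by
  induction h : T - k using Nat.strong_induction_on generalizing k i with
  | _ d ih =>
    refine (isUnit_iff_isUnit_det _).1 (opW_posDef hP hp0 hγ hcontr hk (hpos k i) ?_).isUnit
    exact fun l hkl hlT a => ih (T - l) (by omega) hlT a rfl

end Contraction

theorem statement9_general (n m p N J : ℕ) (Am : Fin N → Matrix (Fin n) (Fin n) ℝ)
    (Bm : Fin N → Matrix (Fin n) (Fin m) ℝ) (Cm : Fin N → Matrix (Fin p) (Fin n) ℝ)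
    (Dm : Fin N → Matrix (Fin p) (Fin m) ℝ) (Pm : Fin J → Matrix (Fin N) (Fin N) ℝ)
    (Ψ : Set (ℕ → Fin J))
    (hPnn : ∀ (s : Fin J) (i j : Fin N), 0 ≤ Pm s i j)
    (p0 : Fin N → ℝ) (hp0nn : ∀ i, 0 ≤ p0 i)
    (hpos : ∀ ψ ∈ Ψ, ∀ (k : ℕ) (i : Fin N), 0 < pdist Pm ψ p0 k i)
    (γ : ℝ) (hγ0 : 0 < γ) (hγ1 : γ < 1)
    (hcontr : ∀ ψ ∈ Ψ, ContractiveWith Am Bm Cm Dm Pm γ ψ p0) :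
    ∀ ψ ∈ Ψ, ∀ (i : Fin N) (T k : ℕ), k ≤ T →
      (opW Bm Dm i (∑ j, Pm (ψ (k + 1)) i j • ric Am Bm Cm Dm Pm ψ j (k + 1) T) -
        (1 - γ ^ 2) • 1).PosSemidef ∧
      (opW Bm Dm i (∑ j, Pm (ψ (k + 1)) i j • ric Am Bm Cm Dm Pm ψ j (k + 1) T)).PosDef ∧
      IsUnit (opW Bm Dm i
        (∑ j, Pm (ψ (k + 1)) i j • ric Am Bm Cm Dm Pm ψ j (k + 1) T)).det := by
  intro ψ hψ i T k hk
  have hγ : γ ^ 2 < 1 := pow_lt_one₀ hγ0.le hγ1 two_ne_zero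
  have hW := fun l (_ : k < l) (hlT : l ≤ T) a =>
    isUnit_det_opW hPnn hp0nn hγ (hcontr ψ hψ) (hpos ψ hψ) hlT a
  have hpd := opW_posDef hPnn hp0nn hγ (hcontr ψ hψ) hk (hpos ψ hψ k i) hW
  exact ⟨opW_sub_posSemidef hPnn hp0nn hγ.le (hcontr ψ hψ) hk (hpos ψ hψ k i) hW, hpd,
    (isUnit_iff_isUnit_det _).1 hpd.isUnit⟩

/-- (Lemma 4.) Assume `p_i(k) > 0` for all `ψ ∈ Ψ`, `i`, `k`. If the switched
system is uniformly mean square strictly contractive with constant `γ ∈ (0,1)`, then with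
`ν = 1 − γ²` one has `𝒲(i, X̃_ψ(i,k+1,T)) ≥ ν I` (in particular `𝒲(i, X̃_ψ(i,k+1,T))` is
positive definite, hence invertible) for all `ψ ∈ Ψ`, `i ∈ 𝒩`, `T ∈ ℕ₀`, `0 ≤ k ≤ T`. -/
theorem statement9 (n m p N J : ℕ) (Am : Fin N → Matrix (Fin n) (Fin n) ℝ)
    (Bm : Fin N → Matrix (Fin n) (Fin m) ℝ) (Cm : Fin N → Matrix (Fin p) (Fin n) ℝ)
    (Dm : Fin N → Matrix (Fin p) (Fin m) ℝ) (Pm : Fin J → Matrix (Fin N) (Fin N) ℝ)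
    (Ψ : Set (ℕ → Fin J)) (hΨ : Ψ.Nonempty)
    (hPnn : ∀ (s : Fin J) (i j : Fin N), 0 ≤ Pm s i j)
    (hProw : ∀ (s : Fin J) (i : Fin N), ∑ j, Pm s i j = 1)
    (p0 : Fin N → ℝ) (hp0nn : ∀ i, 0 ≤ p0 i) (hp0sum : ∑ i, p0 i = 1)
    (hpos : ∀ ψ ∈ Ψ, ∀ (k : ℕ) (i : Fin N), 0 < pdist Pm ψ p0 k i)
    (γ : ℝ) (hγ0 : 0 < γ) (hγ1 : γ < 1)
    (hcontr : ∀ ψ ∈ Ψ, ContractiveWith Am Bm Cm Dm Pm γ ψ p0) :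
    ∀ ψ ∈ Ψ, ∀ (i : Fin N) (T k : ℕ), k ≤ T →
      (opW Bm Dm i (∑ j, Pm (ψ (k + 1)) i j • ric Am Bm Cm Dm Pm ψ j (k + 1) T) -
        (1 - γ ^ 2) • 1).PosSemidef ∧
      (opW Bm Dm i (∑ j, Pm (ψ (k + 1)) i j • ric Am Bm Cm Dm Pm ψ j (k + 1) T)).PosDef ∧
      IsUnit (opW Bm Dm i
        (∑ j, Pm (ψ (k + 1)) i j • ric Am Bm Cm Dm Pm ψ j (k + 1) T)).det :=
  statement9_general n m p N J Am Bm Cm Dm Pm Ψ hPnn p0 hp0nn hpos γ hγ0 hγ1 hcontr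

end SMJLS
end
end
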